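/- arXiv:1811.00958 — 8 statements merged into one kernel-verified Lean document; each statement's English description precedes it below -/
import Mathlib

section
/- Let X, Q ∈ ℝ^{n×m}, let β* ∈ ℝ^m with support set T := {j : β*_j ≠ 0}, let ε ∈ ℝ^n, and set y := Xβ* + ε and λ := ‖Qᵀε‖_∞. Fix p ∈ [1,∞) and suppose there is a constant ρ > 0 such that for every index set T' ⊆ {1,…,m} with |T'| ≤ |T| and every h ∈ ℝ^m satisfying ‖h_{T'ᶜ}‖₁ ≤ ‖h_{T'}‖₁, one has ρ·‖h‖_p ≤ ‖QᵀXh‖_∞. Then any vector β̂ that minimizes ‖β‖₁ over the set {β ∈ ℝ^m : ‖Qᵀ(Xβ − y)‖_∞ ≤ λ} satisfies ‖β̂ − β*‖_p ≤ 2‖Qᵀε‖_∞ / ρ. -/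
open Matrix Finset

/-- **Theorem 1 (GDDS error bound).** If the generalized restricted (GR) condition holds
with constant `ρ > 0`, then any `ℓ¹`-minimizer over the GDDS feasible set
(with `λ = ‖Qᵀε‖_∞`) is within `2‖Qᵀε‖_∞ / ρ` of the truth in `ℓᵖ` norm. -/
theorem gdds_error_bound (n m : ℕ) (X Q : Matrix (Fin n) (Fin m) ℝ)
    (βstar : Fin m → ℝ) (ε : Fin n → ℝ) (y : Fin n → ℝ) (hy : y = X *ᵥ βstar + ε)
    (T : Finset (Fin m)) (hT : T = Finset.univ.filter fun j => βstar j ≠ 0)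
    (p : ℝ) (hp : 1 ≤ p) (ρ : ℝ) (hρ : 0 < ρ)
    (hGR : ∀ T' : Finset (Fin m), T'.card ≤ T.card → ∀ h : Fin m → ℝ,
      (∑ j ∈ T'ᶜ, |h j|) ≤ (∑ j ∈ T', |h j|) →
      ρ * (∑ j, |h j| ^ p) ^ (1 / p) ≤ ⨆ i, |(Qᵀ *ᵥ (X *ᵥ h)) i|)
    (lam : ℝ) (hlam : lam = ⨆ i, |(Qᵀ *ᵥ ε) i|)
    (βhat : Fin m → ℝ)
    (hfeas : (⨆ i, |(Qᵀ *ᵥ (X *ᵥ βhat - y)) i|) ≤ lam)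
    (hmin : ∀ β : Fin m → ℝ, (⨆ i, |(Qᵀ *ᵥ (X *ᵥ β - y)) i|) ≤ lam →
      (∑ j, |βhat j|) ≤ ∑ j, |β j|) :
    (∑ j, |βhat j - βstar j| ^ p) ^ (1 / p) ≤ 2 * (⨆ i, |(Qᵀ *ᵥ ε) i|) / ρ := by
  set h : Fin m → ℝ := fun j => βhat j - βstar j with hh
  -- β* is feasible
  have hstar_res : X *ᵥ βstar - y = -ε := by
    rw [hy]; ext i; simp
  have hstar_feas : (⨆ i, |(Qᵀ *ᵥ (X *ᵥ βstar - y)) i|) ≤ lam := by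
    rw [hstar_res, hlam]
    have : ∀ i, |(Qᵀ *ᵥ (-ε)) i| = |(Qᵀ *ᵥ ε) i| := by
      intro i; rw [Matrix.mulVec_neg]; simp
    simp only [this]; exact le_refl _
  have hl1 : (∑ j, |βhat j|) ≤ ∑ j, |βstar j| := hmin βstar hstar_feas
  -- cone condition
  have hzero : ∀ j ∈ Tᶜ, βstar j = 0 := by
    intro j hj
    rw [hT] at hj
    simpa using (Finset.mem_compl.mp hj)
  have hcone : (∑ j ∈ Tᶜ, |h j|) ≤ ∑ j ∈ T, |h j| := by
    have e1 : (∑ j ∈ Tᶜ, |h j|) = ∑ j ∈ Tᶜ, |βhat j| := by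
      apply Finset.sum_congr rfl
      intro j hj; rw [hh]; simp [hzero j hj]
    have e2 : (∑ j, |βstar j|) = ∑ j ∈ T, |βstar j| := by
      rw [← Finset.sum_add_sum_compl T fun j => |βstar j|]
      have : (∑ j ∈ Tᶜ, |βstar j|) = 0 := by
        apply Finset.sum_eq_zero; intro j hj; simp [hzero j hj]
      rw [this, add_zero]
    have e3 : (∑ j, |βhat j|) = (∑ j ∈ T, |βhat j|) + ∑ j ∈ Tᶜ, |βhat j| :=
      (Finset.sum_add_sum_compl T fun j => |βhat j|).symm
    have e4 : (∑ j ∈ T, |βstar j|) ≤ (∑ j ∈ T, |βhat j|) + ∑ j ∈ T, |h j| := by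
      rw [← Finset.sum_add_distrib]
      apply Finset.sum_le_sum
      intro j _
      have : βstar j = βhat j - h j := by rw [hh]; ring
      rw [this]
      exact abs_sub _ _
    rw [e1]
    have := hl1
    rw [e2, e3] at this
    linarith
  -- GR condition
  have hGRh := hGR T le_rfl h hcone
  -- bound the RHS
  have hXh : X *ᵥ h = (X *ᵥ βhat - y) + ε := by
    have hfun : h = βhat - βstar := rfl
    rw [hfun, Matrix.mulVec_sub, hy]
    ext i; simp; ring
  have hbound : (⨆ i, |(Qᵀ *ᵥ (X *ᵥ h)) i|) ≤ 2 * lam := by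
    rcases Nat.eq_zero_or_pos m with hm | hm
    · subst hm
      have : IsEmpty (Fin 0) := inferInstance
      rw [iSup_of_empty']
      have hlam0 : lam = 0 := by rw [hlam, iSup_of_empty']; exact Real.sSup_empty
      rw [hlam0, Real.sSup_empty]; norm_num
    · have : Nonempty (Fin m) := ⟨⟨0, hm⟩⟩
      apply ciSup_le
      intro i
      have : (Qᵀ *ᵥ (X *ᵥ h)) i = (Qᵀ *ᵥ (X *ᵥ βhat - y)) i + (Qᵀ *ᵥ ε) i := by
        rw [hXh, Matrix.mulVec_add]; simp
      rw [this]
      have t1 : |(Qᵀ *ᵥ (X *ᵥ βhat - y)) i| ≤ lam :=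
        le_trans (le_ciSup (f := fun i => |(Qᵀ *ᵥ (X *ᵥ βhat - y)) i|)
          (Set.Finite.bddAbove (Set.finite_range _)) i) hfeas
      have t2 : |(Qᵀ *ᵥ ε) i| ≤ lam := by
        rw [hlam]
        exact le_ciSup (f := fun i => |(Qᵀ *ᵥ ε) i|)
          (Set.Finite.bddAbove (Set.finite_range _)) i
      calc |(Qᵀ *ᵥ (X *ᵥ βhat - y)) i + (Qᵀ *ᵥ ε) i|
          ≤ |(Qᵀ *ᵥ (X *ᵥ βhat - y)) i| + |(Qᵀ *ᵥ ε) i| := abs_add_le _ _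
        _ ≤ lam + lam := add_le_add t1 t2
        _ = 2 * lam := by ring
  have key : ρ * (∑ j, |h j| ^ p) ^ (1 / p) ≤ 2 * lam := le_trans hGRh hbound
  rw [hlam] at key
  rw [le_div_iff₀ hρ]
  calc (∑ j, |βhat j - βstar j| ^ p) ^ (1 / p) * ρ
      = ρ * (∑ j, |h j| ^ p) ^ (1 / p) := by rw [mul_comm]
    _ ≤ 2 * (⨆ i, |(Qᵀ *ᵥ ε) i|) := key
end

section
/- Let X, Q ∈ ℝ^{n×m}, let β* ∈ ℝ^m with support set T := {j : β*_j ≠ 0}, and set y := Xβ* (noiseless case, ε = 0). Fix p ∈ [1,∞) and suppose there is a constant ρ > 0 such that for every index set T' ⊆ {1,…,m} with |T'| ≤ |T| and every h ∈ ℝ^m satisfying ‖h_{T'ᶜ}‖₁ ≤ ‖h_{T'}‖₁, one has ρ·‖h‖_p ≤ ‖QᵀXh‖_∞. Then any vector β̂ that minimizes ‖β‖₁ over the set {β ∈ ℝ^m : ‖Qᵀ(Xβ − y)‖_∞ ≤ 0} satisfies β̂ = β*, i.e. the GDDS exactly recovers β*. -/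
open Matrix Finset

/-- **Noiseless exact recovery for GDDS.** In the noiseless case `y = Xβ*`, under the
generalized restricted (GR) condition with constant `ρ > 0`, any `ℓ¹`-minimizer over the
feasible set `{β : ‖Qᵀ(Xβ − y)‖_∞ ≤ 0}` equals `β*`. -/
theorem gdds_exact_recovery_noiseless (n m : ℕ) (X Q : Matrix (Fin n) (Fin m) ℝ)
    (βstar : Fin m → ℝ) (y : Fin n → ℝ) (hy : y = X *ᵥ βstar)
    (T : Finset (Fin m)) (hT : T = Finset.univ.filter fun j => βstar j ≠ 0)
    (p : ℝ) (hp : 1 ≤ p) (ρ : ℝ) (hρ : 0 < ρ)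
    (hGR : ∀ T' : Finset (Fin m), T'.card ≤ T.card → ∀ h : Fin m → ℝ,
      (∑ j ∈ T'ᶜ, |h j|) ≤ (∑ j ∈ T', |h j|) →
      ρ * (∑ j, |h j| ^ p) ^ (1 / p) ≤ ⨆ i, |(Qᵀ *ᵥ (X *ᵥ h)) i|)
    (βhat : Fin m → ℝ)
    (hfeas : (⨆ i, |(Qᵀ *ᵥ (X *ᵥ βhat - y)) i|) ≤ 0)
    (hmin : ∀ β : Fin m → ℝ, (⨆ i, |(Qᵀ *ᵥ (X *ᵥ β - y)) i|) ≤ 0 →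
      (∑ j, |βhat j|) ≤ ∑ j, |β j|) :
    βhat = βstar := by
  have hp0 : p ≠ 0 := by positivity
  -- βstar is feasible
  have hstar : (⨆ i, |(Qᵀ *ᵥ (X *ᵥ βstar - y)) i|) ≤ 0 := by
    rw [hy]
    simp [mulVec_zero]
  have hl1 : (∑ j, |βhat j|) ≤ ∑ j, |βstar j| := hmin βstar hstar
  -- outside T, βstar vanishes
  have hout : ∀ j : Fin m, j ∉ T → βstar j = 0 := by
    intro j hj
    by_contra hne
    exact hj (hT ▸ Finset.mem_filter.mpr ⟨Finset.mem_univ j, hne⟩)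
  set h : Fin m → ℝ := βhat - βstar with hh
  -- cone condition
  have hcone : (∑ j ∈ Tᶜ, |h j|) ≤ ∑ j ∈ T, |h j| := by
    have e1 : (∑ j ∈ Tᶜ, |h j|) = ∑ j ∈ Tᶜ, |βhat j| := by
      apply Finset.sum_congr rfl
      intro j hj
      have : βstar j = 0 := hout j (Finset.mem_compl.mp hj)
      simp [hh, this]
    have e2 : (∑ j, |βstar j|) = ∑ j ∈ T, |βstar j| := by
      rw [← Finset.sum_subset (Finset.subset_univ T)]
      intro j _ hj
      simp [hout j hj]
    have e3 : (∑ j, |βhat j|) = (∑ j ∈ T, |βhat j|) + ∑ j ∈ Tᶜ, |βhat j| :=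
      (Finset.sum_add_sum_compl T _).symm
    have key : (∑ j ∈ Tᶜ, |βhat j|) ≤ ∑ j ∈ T, (|βstar j| - |βhat j|) := by
      rw [Finset.sum_sub_distrib]
      have := hl1
      rw [e3, e2] at this
      linarith
    rw [e1]
    refine key.trans (Finset.sum_le_sum fun j _ => ?_)
    have : |βstar j| - |βhat j| ≤ |βstar j - βhat j| := abs_sub_abs_le_abs_sub _ _
    have habs : |h j| = |βstar j - βhat j| := by
      rw [hh]; simp [abs_sub_comm]
    linarith [habs ▸ this]
  have hGRT := hGR T le_rfl h hcone
  have hXh : X *ᵥ h = X *ᵥ βhat - y := by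
    rw [hy, hh, mulVec_sub]
  rw [hXh] at hGRT
  have hle : ρ * (∑ j, |h j| ^ p) ^ (1 / p) ≤ 0 := hGRT.trans hfeas
  have hsum0 : (∑ j, |h j| ^ p) = 0 := by
    have hnn : (0:ℝ) ≤ ∑ j, |h j| ^ p :=
      Finset.sum_nonneg fun j _ => Real.rpow_nonneg (abs_nonneg _) _
    have hpow : (∑ j, |h j| ^ p) ^ (1 / p) = 0 := by
      nlinarith [Real.rpow_nonneg hnn (1/p)]
    have := (Real.rpow_eq_zero hnn (by positivity : 1/p ≠ 0)).mp hpow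
    exact this
  have hzero : ∀ j, h j = 0 := by
    intro j
    have hterm : |h j| ^ p = 0 := by
      have hnn : ∀ i ∈ Finset.univ, (0:ℝ) ≤ |h i| ^ p :=
        fun i _ => Real.rpow_nonneg (abs_nonneg _) _
      exact (Finset.sum_eq_zero_iff_of_nonneg hnn).mp hsum0 j (Finset.mem_univ j)
    have := (Real.rpow_eq_zero (abs_nonneg _) hp0).mp hterm
    exact abs_eq_zero.mp this
  funext j
  have := hzero j
  have : βhat j - βstar j = 0 := this
  linarith
end

section
/- Let X ∈ ℝ^{2×2} be the matrix with rows (√3/2, 1/2) and (1/2, √3/2). Then for every index set T ⊆ {1,2} with |T| ≤ 1 and every h ∈ ℝ² with ‖h_{Tᶜ}‖₁ ≤ ‖h_T‖₁, one has ‖Xh‖_∞ ≥ (√3/2 − 1/2)·max_{j∈T} |h_j|. -/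
open Matrix Finset

lemma aux_abs_lb (a b : ℝ) : |a| - |b| ≤ |a + b| := by
  have := abs_sub_abs_le_abs_sub a (-b)
  simpa [sub_neg_eq_add] using this

/-- **GR-constant lower bound in the counter-example.** For
`X = [[√3/2, 1/2], [1/2, √3/2]]` and `Q = I` (so `QᵀX = X`): for every `T ⊆ {1,2}` with
`|T| ≤ 1` and every `h` with `‖h_{Tᶜ}‖₁ ≤ ‖h_T‖₁`, one has
`‖Xh‖_∞ ≥ (√3/2 − 1/2)·max_{j∈T}|h_j|`. -/
theorem counterexample_identity_lower_bound
    (X : Matrix (Fin 2) (Fin 2) ℝ)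
    (hX : X = !![Real.sqrt 3 / 2, 1 / 2; 1 / 2, Real.sqrt 3 / 2]) :
    ∀ T : Finset (Fin 2), T.card ≤ 1 →
      ∀ h : Fin 2 → ℝ, (∑ j ∈ Tᶜ, |h j|) ≤ (∑ j ∈ T, |h j|) →
        ∀ j ∈ T, (Real.sqrt 3 / 2 - 1 / 2) * |h j| ≤ ⨆ i, |(X *ᵥ h) i| := by
  intro T hT h hsum j hj
  have hTeq : T = {j} := by
    apply Finset.eq_singleton_iff_unique_mem.mpr
    refine ⟨hj, fun x hx => ?_⟩
    by_contra hne
    have := Finset.one_lt_card_iff.mpr ⟨x, j, hx, hj, hne⟩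
    omega
  subst hX hTeq
  have hs3 : (0:ℝ) ≤ Real.sqrt 3 := Real.sqrt_nonneg 3
  have habs : ∀ a : ℝ, |Real.sqrt 3 / 2 * a| = Real.sqrt 3 / 2 * |a| := by
    intro a; rw [abs_mul, abs_of_nonneg (by linarith)]
  have hub : ∀ i, |((!![Real.sqrt 3 / 2, 1 / 2; 1 / 2, Real.sqrt 3 / 2] : Matrix (Fin 2) (Fin 2) ℝ) *ᵥ h) i| ≤ ⨆ i, |((!![Real.sqrt 3 / 2, 1 / 2; 1 / 2, Real.sqrt 3 / 2] : Matrix (Fin 2) (Fin 2) ℝ) *ᵥ h) i| := by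
    intro i
    exact le_ciSup (f := fun i => |((!![Real.sqrt 3 / 2, 1 / 2; 1 / 2, Real.sqrt 3 / 2] : Matrix (Fin 2) (Fin 2) ℝ) *ᵥ h) i|) (Set.Finite.bddAbove (Set.finite_range _)) i
  fin_cases j
  · have hc : |h 1| ≤ |h 0| := by
      have h0 : ({0} : Finset (Fin 2))ᶜ = {1} := by decide
      simpa [h0] using hsum
    refine le_trans ?_ (hub 0)
    have : |Real.sqrt 3 / 2 * h 0| - |1 / 2 * h 1| ≤ |Real.sqrt 3 / 2 * h 0 + 1 / 2 * h 1| :=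
      aux_abs_lb _ _
    rw [habs, abs_mul] at this
    have e : ((!![Real.sqrt 3 / 2, 1 / 2; 1 / 2, Real.sqrt 3 / 2] : Matrix (Fin 2) (Fin 2) ℝ) *ᵥ h) 0 = Real.sqrt 3 / 2 * h 0 + 1 / 2 * h 1 := by
      simp [Matrix.mulVec, dotProduct, Fin.sum_univ_two]
    rw [e]
    have h12 : |(1:ℝ)/2| = 1/2 := by norm_num
    rw [h12] at this
    show (Real.sqrt 3 / 2 - 1 / 2) * |h 0| ≤ _
    nlinarith [abs_nonneg (h 0), abs_nonneg (h 1)]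
  · have hc : |h 0| ≤ |h 1| := by
      have h0 : ({1} : Finset (Fin 2))ᶜ = {0} := by decide
      simpa [h0] using hsum
    refine le_trans ?_ (hub 1)
    have : |Real.sqrt 3 / 2 * h 1| - |1 / 2 * h 0| ≤ |1 / 2 * h 0 + Real.sqrt 3 / 2 * h 1| := by
      have h2 := aux_abs_lb (Real.sqrt 3 / 2 * h 1) (1 / 2 * h 0)
      rw [add_comm] at h2
      exact h2
    rw [habs, abs_mul] at this
    have e : ((!![Real.sqrt 3 / 2, 1 / 2; 1 / 2, Real.sqrt 3 / 2] : Matrix (Fin 2) (Fin 2) ℝ) *ᵥ h) 1 = 1 / 2 * h 0 + Real.sqrt 3 / 2 * h 1 := by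
      simp [Matrix.mulVec, dotProduct, Fin.sum_univ_two]
    rw [e]
    have h12 : |(1:ℝ)/2| = 1/2 := by norm_num
    rw [h12] at this
    show (Real.sqrt 3 / 2 - 1 / 2) * |h 1| ≤ _
    nlinarith [abs_nonneg (h 0), abs_nonneg (h 1)]
end

section
/- Let X ∈ ℝ^{2×2} be the matrix with rows (√3/2, 1/2) and (1/2, √3/2). Then the vector h = (1, −1) with T = {1} satisfies |T| ≤ 1, ‖h_{Tᶜ}‖₁ ≤ ‖h_T‖₁, max_{j∈T} |h_j| = 1, and ‖XᵀXh‖_∞ = 1 − √3/2. Consequently, since 1 − √3/2 < √3/2 − 1/2, the generalized restricted constant of the pair (X, X) with sparsity level 1 is strictly smaller than that of the pair (I, X): there exists an admissible h for which ‖XᵀXh‖_∞ / max_{j∈T}|h_j| = 1 − √3/2 < √3/2 − 1/2 ≤ inf ‖Xh‖_∞ / max_{j∈T}|h_j| over all admissible (T, h). -/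
open Matrix Finset

/-!
`XᵀX h = (1 - √3/2)(1, -1)` by direct computation, which beats the bound `√3/2 - 1/2` since
`√3 > 3/2`. The bound for `Q = I` is diagonal dominance: if `T' = {j}` is admissible for `g`, the
off-diagonal terms of row `j` of `X g` contribute at most `1/2 · ∑_{k ≠ j} |g k| ≤ 1/2 · |g j|`,
against `√3/2 · |g j|` from the diagonal.
-/

theorem three_halves_lt_sqrt_three : (3 / 2 : ℝ) < √3 :=
  (Real.lt_sqrt (by norm_num)).2 (by norm_num)

theorem sqrt_three_le_two : √3 ≤ 2 :=
  (Real.sqrt_le_left (by norm_num)).2 (by norm_num)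

theorem le_abs_mulVec_apply_of_offDiag_le {ι : Type*} [Fintype ι] [DecidableEq ι]
    (X : Matrix ι ι ℝ) (g : ι → ℝ) {j : ι} {d μ : ℝ} (hμ : 0 ≤ μ) (hd : d ≤ |X j j|)
    (hoff : ∀ k ≠ j, |X j k| ≤ μ) (hg : ∑ k ∈ {j}ᶜ, |g k| ≤ |g j|) :
    (d - μ) * |g j| ≤ |(X *ᵥ g) j| := by
  have hsplit : (X *ᵥ g) j = X j j * g j + ∑ k ∈ {j}ᶜ, X j k * g k :=
    Fintype.sum_eq_add_sum_compl j _
  have hrest : |∑ k ∈ {j}ᶜ, X j k * g k| ≤ μ * |g j| :=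
    calc |∑ k ∈ {j}ᶜ, X j k * g k|
        ≤ ∑ k ∈ {j}ᶜ, |X j k * g k| := abs_sum_le_sum_abs _ _
      _ ≤ ∑ k ∈ {j}ᶜ, μ * |g k| := by
        refine sum_le_sum fun k hk => ?_
        rw [abs_mul]
        exact mul_le_mul_of_nonneg_right (hoff k (by simpa using hk)) (abs_nonneg _)
      _ = μ * ∑ k ∈ {j}ᶜ, |g k| := (mul_sum _ _ _).symm
      _ ≤ μ * |g j| := mul_le_mul_of_nonneg_left hg hμ
  calc (d - μ) * |g j|
      = d * |g j| - μ * |g j| := sub_mul _ _ _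
    _ ≤ |X j j * g j| - |∑ k ∈ {j}ᶜ, X j k * g k| := by
        rw [abs_mul]
        linarith [mul_le_mul_of_nonneg_right hd (abs_nonneg (g j))]
    _ ≤ |(X *ᵥ g) j| := hsplit ▸ abs_sub_abs_le_abs_add _ _

theorem le_iSup_abs_mulVec_of_admissible {ι : Type*} [Fintype ι] [DecidableEq ι]
    (X : Matrix ι ι ℝ) {d μ : ℝ} (hμ : 0 ≤ μ) (hd : ∀ j, d ≤ |X j j|)
    (hoff : ∀ j, ∀ k ≠ j, |X j k| ≤ μ) (T : Finset ι) (hT : T.card ≤ 1) (g : ι → ℝ)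
    (hg : ∑ k ∈ Tᶜ, |g k| ≤ ∑ k ∈ T, |g k|) {j : ι} (hj : j ∈ T) :
    (d - μ) * |g j| ≤ ⨆ i, |(X *ᵥ g) i| := by
  obtain rfl : T = {j} :=
    eq_singleton_iff_unique_mem.2 ⟨hj, fun k hk => card_le_one.1 hT k hk j hj⟩
  rw [sum_singleton] at hg
  exact (le_abs_mulVec_apply_of_offDiag_le X g hμ (hd j) (hoff j) hg).trans
    (le_ciSup (f := fun i => |(X *ᵥ g) i|) (Set.finite_range _).bddAbove j)

theorem iSup_abs_eq_of_forall_abs_eq {ι : Type*} [Nonempty ι] {v : ι → ℝ} {c : ℝ}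
    (hv : ∀ i, |v i| = c) : ⨆ i, |v i| = c := by
  simp only [hv, ciSup_const]

theorem transpose_mulVec_mulVec_one_neg_one :
    (!![√3 / 2, 1 / 2; 1 / 2, √3 / 2] : Matrix (Fin 2) (Fin 2) ℝ)ᵀ *ᵥ
        ((!![√3 / 2, 1 / 2; 1 / 2, √3 / 2] : Matrix (Fin 2) (Fin 2) ℝ) *ᵥ ![1, -1]) =
      ![1 - √3 / 2, -(1 - √3 / 2)] := by
  have hsq : √3 * √3 = 3 := Real.mul_self_sqrt (by norm_num)
  ext i
  fin_cases i <;> simp [mulVec, dotProduct, Fin.sum_univ_two] <;> linarith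

/-- **Counter-example: `Xᵀ` is not the optimal denoising matrix.** For
`X = [[√3/2, 1/2], [1/2, √3/2]]`, the pair `h = (1,−1)`, `T = {1}` is admissible
(`|T| ≤ 1`, `‖h_{Tᶜ}‖₁ ≤ ‖h_T‖₁`, `max_{j∈T}|h_j| = 1`) and achieves
`‖XᵀXh‖_∞ = 1 − √3/2 < √3/2 − 1/2`, while `Q = I` satisfies
`(√3/2 − 1/2)·max_{j∈T'}|g_j| ≤ ‖Xg‖_∞` for every admissible `(T', g)`. Hence the GR
constant of `(X, X)` at sparsity level 1 is strictly smaller than that of `(I, X)`. -/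
theorem counterexample_X_not_optimal
    (X : Matrix (Fin 2) (Fin 2) ℝ)
    (hX : X = !![Real.sqrt 3 / 2, 1 / 2; 1 / 2, Real.sqrt 3 / 2])
    (h : Fin 2 → ℝ) (hh : h = ![1, -1])
    (T : Finset (Fin 2)) (hT : T = {0}) :
    T.card ≤ 1 ∧
    (∑ j ∈ Tᶜ, |h j|) ≤ (∑ j ∈ T, |h j|) ∧
    T.sup' (by simp [hT]) (fun j => |h j|) = 1 ∧
    (⨆ i, |(Xᵀ *ᵥ (X *ᵥ h)) i|) = 1 - Real.sqrt 3 / 2 ∧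
    1 - Real.sqrt 3 / 2 < Real.sqrt 3 / 2 - 1 / 2 ∧
    (⨆ i, |(Xᵀ *ᵥ (X *ᵥ h)) i|) / T.sup' (by simp [hT]) (fun j => |h j|) =
      1 - Real.sqrt 3 / 2 ∧
    (∀ T' : Finset (Fin 2), T'.card ≤ 1 →
      ∀ g : Fin 2 → ℝ, g ≠ 0 → (∑ j ∈ T'ᶜ, |g j|) ≤ (∑ j ∈ T', |g j|) →
        ∀ j ∈ T', (Real.sqrt 3 / 2 - 1 / 2) * |g j| ≤ ⨆ i, |(X *ᵥ g) i|) := by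
  subst hX hh hT
  have hmax : ({0} : Finset (Fin 2)).sup' (by simp) (fun j => |![(1 : ℝ), -1] j|) = 1 := by
    simp
  have hnoise : (⨆ i, |(!![√3 / 2, 1 / 2; 1 / 2, √3 / 2]ᵀ *ᵥ
      (!![√3 / 2, 1 / 2; 1 / 2, √3 / 2] *ᵥ ![(1 : ℝ), -1])) i|) = 1 - √3 / 2 := by
    rw [transpose_mulVec_mulVec_one_neg_one]
    refine iSup_abs_eq_of_forall_abs_eq fun i => ?_
    have : 0 ≤ 1 - √3 / 2 := by linarith [sqrt_three_le_two]
    fin_cases i <;> simp [abs_of_nonneg this, abs_sub_comm (√3 / 2)]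
  refine ⟨by simp, by simp [show ({0} : Finset (Fin 2))ᶜ = {1} from rfl], hmax, hnoise,
    by linarith [three_halves_lt_sqrt_three], by rw [hmax, hnoise, div_one], ?_⟩
  intro T' hT' g _ hg j hj
  refine le_iSup_abs_mulVec_of_admissible _ (by norm_num) (fun j => ?_) (fun j k hkj => ?_)
    T' hT' g hg hj
  · fin_cases j <;> exact le_abs_self _
  · fin_cases j <;> fin_cases k <;> simp_all
end

section
/- Let X ∈ ℝ^{n×m} satisfy the restricted isometry property of order 2s with constant δ ∈ [0,1): for all g ∈ ℝ^m with at most 2s nonzero entries, (1−δ)‖g‖₂² ≤ ‖Xg‖₂² ≤ (1+δ)‖g‖₂². Then for any u, v ∈ ℝ^m with disjoint supports, each of cardinality at most s, one has |⟨Xu, Xv⟩| ≤ δ·‖u‖₂·‖v‖₂. -/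
open Matrix Finset

lemma rip_cross_aux (n m s : ℕ) (X : Matrix (Fin n) (Fin m) ℝ)
    (δ : ℝ)
    (hRIP : ∀ g : Fin m → ℝ, (Finset.univ.filter fun j => g j ≠ 0).card ≤ 2 * s →
      (1 - δ) * ∑ j, (g j) ^ 2 ≤ (∑ i, ((X *ᵥ g) i) ^ 2) ∧
      (∑ i, ((X *ᵥ g) i) ^ 2) ≤ (1 + δ) * ∑ j, (g j) ^ 2)
    (u v : Fin m → ℝ)
    (hdisj : ∀ j, u j = 0 ∨ v j = 0)
    (hu : (Finset.univ.filter fun j => u j ≠ 0).card ≤ s)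
    (hv : (Finset.univ.filter fun j => v j ≠ 0).card ≤ s) :
    |∑ i, (X *ᵥ u) i * (X *ᵥ v) i| ≤ δ / 2 * (∑ j, (u j) ^ 2 + ∑ j, (v j) ^ 2) := by
  have hcard : ∀ (w : Fin m → ℝ), (∀ j, w j ≠ 0 → u j ≠ 0 ∨ v j ≠ 0) →
      (Finset.univ.filter fun j => w j ≠ 0).card ≤ 2 * s := by
    intro w hw
    calc (Finset.univ.filter fun j => w j ≠ 0).card
        ≤ ((Finset.univ.filter fun j => u j ≠ 0) ∪
            (Finset.univ.filter fun j => v j ≠ 0)).card := by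
          apply Finset.card_le_card
          intro j hj
          simp only [Finset.mem_filter, Finset.mem_union, Finset.mem_univ, true_and] at *
          exact hw j hj
      _ ≤ (Finset.univ.filter fun j => u j ≠ 0).card +
            (Finset.univ.filter fun j => v j ≠ 0).card := Finset.card_union_le _ _
      _ ≤ 2 * s := by omega
  have hadd : ∀ j, (u j + v j) ≠ 0 → u j ≠ 0 ∨ v j ≠ 0 := by
    intro j h; by_contra hc; push_neg at hc; simp [hc.1, hc.2] at h
  have hsub : ∀ j, (u j - v j) ≠ 0 → u j ≠ 0 ∨ v j ≠ 0 := by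
    intro j h; by_contra hc; push_neg at hc; simp [hc.1, hc.2] at h
  have h1 := hRIP (u + v) (hcard _ (fun j h => hadd j (by simpa using h)))
  have h2 := hRIP (u - v) (hcard _ (fun j h => hsub j (by simpa using h)))
  have hnormadd : ∑ j, ((u + v) j) ^ 2 = ∑ j, (u j) ^ 2 + ∑ j, (v j) ^ 2 := by
    rw [← Finset.sum_add_distrib]
    apply Finset.sum_congr rfl
    intro j _
    rcases hdisj j with h | h <;> simp [Pi.add_apply, h] <;> ring
  have hnormsub : ∑ j, ((u - v) j) ^ 2 = ∑ j, (u j) ^ 2 + ∑ j, (v j) ^ 2 := by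
    rw [← Finset.sum_add_distrib]
    apply Finset.sum_congr rfl
    intro j _
    rcases hdisj j with h | h <;> simp [Pi.sub_apply, h] <;> ring
  rw [hnormadd] at h1
  rw [hnormsub] at h2
  have hXadd : ∀ i, (X *ᵥ (u + v)) i = (X *ᵥ u) i + (X *ᵥ v) i := by
    intro i; rw [Matrix.mulVec_add]; rfl
  have hXsub : ∀ i, (X *ᵥ (u - v)) i = (X *ᵥ u) i - (X *ᵥ v) i := by
    intro i; rw [Matrix.mulVec_sub]; rfl
  have hpol : ∑ i, ((X *ᵥ (u + v)) i) ^ 2 - ∑ i, ((X *ᵥ (u - v)) i) ^ 2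
      = 4 * ∑ i, (X *ᵥ u) i * (X *ᵥ v) i := by
    rw [← Finset.sum_sub_distrib, Finset.mul_sum]
    apply Finset.sum_congr rfl
    intro i _
    rw [hXadd, hXsub]; ring
  rw [abs_le]
  constructor <;> nlinarith [h1.1, h1.2, h2.1, h2.2,
    Finset.sum_nonneg (fun j (_ : j ∈ Finset.univ) => sq_nonneg (u j)),
    Finset.sum_nonneg (fun j (_ : j ∈ Finset.univ) => sq_nonneg (v j))]

/-- **Cross-correlation consequence of RIP (Lemma 2.1 of Candès 2008).** If `X` satisfies
RIP of order `2s` with constant `δ ∈ [0,1)`, then for any `u, v` with disjoint supports of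
cardinality at most `s`, `|⟨Xu, Xv⟩| ≤ δ‖u‖₂‖v‖₂`. -/
theorem rip_cross_correlation (n m s : ℕ) (X : Matrix (Fin n) (Fin m) ℝ)
    (δ : ℝ) (hδ0 : 0 ≤ δ) (hδ1 : δ < 1)
    (hRIP : ∀ g : Fin m → ℝ, (Finset.univ.filter fun j => g j ≠ 0).card ≤ 2 * s →
      (1 - δ) * ∑ j, (g j) ^ 2 ≤ (∑ i, ((X *ᵥ g) i) ^ 2) ∧
      (∑ i, ((X *ᵥ g) i) ^ 2) ≤ (1 + δ) * ∑ j, (g j) ^ 2)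
    (u v : Fin m → ℝ)
    (hdisj : ∀ j, u j = 0 ∨ v j = 0)
    (hu : (Finset.univ.filter fun j => u j ≠ 0).card ≤ s)
    (hv : (Finset.univ.filter fun j => v j ≠ 0).card ≤ s) :
    |∑ i, (X *ᵥ u) i * (X *ᵥ v) i| ≤
      δ * Real.sqrt (∑ j, (u j) ^ 2) * Real.sqrt (∑ j, (v j) ^ 2) := by
  set a := Real.sqrt (∑ j, (u j) ^ 2) with ha
  set b := Real.sqrt (∑ j, (v j) ^ 2) with hb
  have hSu : (0:ℝ) ≤ ∑ j, (u j) ^ 2 :=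
    Finset.sum_nonneg (fun j _ => sq_nonneg _)
  have hSv : (0:ℝ) ≤ ∑ j, (v j) ^ 2 :=
    Finset.sum_nonneg (fun j _ => sq_nonneg _)
  have ha2 : a ^ 2 = ∑ j, (u j) ^ 2 := Real.sq_sqrt hSu
  have hb2 : b ^ 2 = ∑ j, (v j) ^ 2 := Real.sq_sqrt hSv
  have ha0 : 0 ≤ a := Real.sqrt_nonneg _
  have hb0 : 0 ≤ b := Real.sqrt_nonneg _
  -- trivial cases: a = 0 or b = 0
  rcases eq_or_lt_of_le ha0 with haz | hap
  · have huz : ∀ j, u j = 0 := by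
      intro j
      have : ∑ j, (u j) ^ 2 = 0 := by rw [← ha2, ← haz]; ring
      have := (Finset.sum_eq_zero_iff_of_nonneg
        (fun j (_ : j ∈ Finset.univ) => sq_nonneg (u j))).mp this j (Finset.mem_univ j)
      exact pow_eq_zero_iff (by norm_num) |>.mp this
    have : ∀ i, (X *ᵥ u) i = 0 := by
      intro i
      simp [Matrix.mulVec, dotProduct, huz]
    simp [this]
    positivity
  rcases eq_or_lt_of_le hb0 with hbz | hbp
  · have hvz : ∀ j, v j = 0 := by
      intro j
      have : ∑ j, (v j) ^ 2 = 0 := by rw [← hb2, ← hbz]; ring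
      have := (Finset.sum_eq_zero_iff_of_nonneg
        (fun j (_ : j ∈ Finset.univ) => sq_nonneg (v j))).mp this j (Finset.mem_univ j)
      exact pow_eq_zero_iff (by norm_num) |>.mp this
    have : ∀ i, (X *ᵥ v) i = 0 := by
      intro i
      simp [Matrix.mulVec, dotProduct, hvz]
    simp [this]
    positivity
  -- main case: apply aux to b•u and a•v
  have hdisj' : ∀ j, (b • u) j = 0 ∨ (a • v) j = 0 := by
    intro j
    rcases hdisj j with h | h
    · left; simp [h]
    · right; simp [h]
  have hu' : (Finset.univ.filter fun j => (b • u) j ≠ 0).card ≤ s := by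
    refine le_trans (Finset.card_le_card ?_) hu
    intro j hj
    simp only [Finset.mem_filter, Finset.mem_univ, true_and, Pi.smul_apply,
      smul_eq_mul] at *
    exact fun h => hj (by rw [h, mul_zero])
  have hv' : (Finset.univ.filter fun j => (a • v) j ≠ 0).card ≤ s := by
    refine le_trans (Finset.card_le_card ?_) hv
    intro j hj
    simp only [Finset.mem_filter, Finset.mem_univ, true_and, Pi.smul_apply,
      smul_eq_mul] at *
    exact fun h => hj (by rw [h, mul_zero])
  have key := rip_cross_aux n m s X δ hRIP (b • u) (a • v) hdisj' hu' hv'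
  have hXsu : ∀ i, (X *ᵥ (b • u)) i = b * (X *ᵥ u) i := by
    intro i; rw [Matrix.mulVec_smul]; rfl
  have hXsv : ∀ i, (X *ᵥ (a • v)) i = a * (X *ᵥ v) i := by
    intro i; rw [Matrix.mulVec_smul]; rfl
  have hsum1 : ∑ i, (X *ᵥ (b • u)) i * (X *ᵥ (a • v)) i
      = (a * b) * ∑ i, (X *ᵥ u) i * (X *ᵥ v) i := by
    rw [Finset.mul_sum]
    apply Finset.sum_congr rfl
    intro i _
    rw [hXsu, hXsv]; ring
  have hsum2 : ∑ j, ((b • u) j) ^ 2 = b ^ 2 * ∑ j, (u j) ^ 2 := by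
    rw [Finset.mul_sum]
    apply Finset.sum_congr rfl
    intro j _
    simp [Pi.smul_apply, smul_eq_mul]; ring
  have hsum3 : ∑ j, ((a • v) j) ^ 2 = a ^ 2 * ∑ j, (v j) ^ 2 := by
    rw [Finset.mul_sum]
    apply Finset.sum_congr rfl
    intro j _
    simp [Pi.smul_apply, smul_eq_mul]; ring
  rw [hsum1, hsum2, hsum3, ← ha2, ← hb2] at key
  rw [abs_mul, abs_of_nonneg (by positivity : (0:ℝ) ≤ a * b)] at key
  have hab : 0 < a * b := mul_pos hap hbp
  have h2 : a * b * |∑ i, (X *ᵥ u) i * (X *ᵥ v) i| ≤ a * b * (δ * a * b) := by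
    nlinarith [key]
  have := le_of_mul_le_mul_left h2 hab
  linarith [this]
end

section
/- Let X ∈ ℝ^{n×m} satisfy the restricted isometry property of order 2s with constant δ ∈ [0,1), let h ∈ ℝ^m, and let T₀ ⊆ {1,…,m} with |T₀| ≤ s satisfy ‖h_{T₀ᶜ}‖₁ ≤ ‖h_{T₀}‖₁. Let T₁ ⊆ T₀ᶜ with |T₁| ≤ s be a set of indices of the s largest-magnitude coordinates of h restricted to T₀ᶜ (i.e. |h_j| ≥ |h_k| for all j ∈ T₁ and k ∈ T₀ᶜ \ T₁), and write T₀₁ := T₀ ∪ T₁. Then ‖Xh‖₂ ≥ (1 − (√2+1)δ)·‖h_{T₀₁}‖₂. -/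
/-!
When the constant is positive we may enlarge `T₁` to the `min s |T₀ᶜ|` largest coordinates of `h`
on `T₀ᶜ`. Write `u = h_{T₀ ∪ T₁}` and `w = h_{T₀ᶜ \ T₁}`, so that `h = u + w`. Polarizing the RIP
bounds for `a • u ± b • v` shows that `|⟨Xu, Xv⟩| ≤ δ ‖u‖ ‖v‖` whenever `u` and `v` have disjoint
supports of total size at most `2s`. Cutting `T₀ᶜ \ T₁` into consecutive blocks of the `s` largest
remaining coordinates, the `ℓ²` norm of each block is at most the `ℓ¹` norm of the previous one
divided by `√s`; with the cone condition this gives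
`|⟨Xu, Xw⟩| ≤ δ (‖h_{T₀}‖ + ‖h_{T₁}‖) ‖h_{T₀}‖ ≤ √2 δ ‖u‖²`. Hence
`‖Xu‖² - √2 δ ‖u‖² ≤ ⟨Xu, Xh⟩ ≤ ‖Xu‖ ‖Xh‖`, and `‖Xu‖² ≥ (1 - δ) ‖u‖²` turns this into the bound.
-/

open Real Matrix Finset

section Arithmetic

theorem mul_le_of_sq_sub_le_mul {δ r N x y : ℝ} (hδ : 0 ≤ δ) (hr : 0 ≤ r)
    (hc : 0 < 1 - (r + 1) * δ) (hN : 0 ≤ N) (hx : 0 ≤ x) (hy : 0 ≤ y)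
    (hlow : (1 - δ) * N ^ 2 ≤ x ^ 2) (hcross : x ^ 2 - r * δ * N ^ 2 ≤ x * y) :
    (1 - (r + 1) * δ) * N ≤ y := by
  -- with `c = 1 - (r + 1) δ`: `x² - cNx - rδN² = (x - N)(x + N - cN) + δN²`, and for `x < N`
  -- it is at least `cN(N - x)` by `hlow`
  have hq : (1 - (r + 1) * δ) * N * x ≤ x ^ 2 - r * δ * N ^ 2 := by
    rcases le_or_gt N x with hNx | hNx
    · have hcN : (1 - (r + 1) * δ) * N ≤ N :=
        mul_le_of_le_one_left hN (by nlinarith [mul_nonneg (add_nonneg hr zero_le_one) hδ])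
      nlinarith [mul_nonneg (sub_nonneg.2 hNx) (by linarith : 0 ≤ x + N - (1 - (r + 1) * δ) * N),
        mul_nonneg hδ (sq_nonneg N)]
    · nlinarith [mul_nonneg (mul_nonneg hc.le hN) (sub_nonneg.2 hNx.le)]
  rcases hx.eq_or_lt with rfl | hxpos
  · nlinarith
  · exact le_of_mul_le_mul_left (by linarith) hxpos

theorem sqrt_add_mul_sqrt_le {a b : ℝ} (ha : 0 ≤ a) (hb : 0 ≤ b) :
    (√a + √b) * √a ≤ √2 * (a + b) := by
  have hsum : √a + √b ≤ √2 * √(a + b) := by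
    rw [← sqrt_mul zero_le_two]
    refine le_sqrt_of_sq_le ?_
    simpa only [sq_sqrt ha, sq_sqrt hb] using add_sq_le (a := √a) (b := √b)
  calc (√a + √b) * √a ≤ √2 * √(a + b) * √(a + b) :=
        mul_le_mul hsum (sqrt_le_sqrt (le_add_of_nonneg_right hb)) (sqrt_nonneg _) (by positivity)
    _ = √2 * (a + b) := by rw [mul_assoc, mul_self_sqrt (add_nonneg ha hb)]

end Arithmetic

section Sparse

variable {κ : Type*}

theorem sum_abs_le_sqrt_mul_sqrt_sum_sq (h : κ → ℝ) {A : Finset κ} {s : ℕ} (hA : #A ≤ s) :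
    ∑ j ∈ A, |h j| ≤ √s * √(∑ j ∈ A, h j ^ 2) := by
  rw [← sqrt_mul (Nat.cast_nonneg s)]
  refine le_sqrt_of_sq_le ((sq_sum_le_card_mul_sum_sq (s := A) (f := (|h ·|))).trans ?_)
  simp only [sq_abs]
  gcongr

theorem sqrt_sum_sq_le_sum_abs_div_sqrt (a : κ → ℝ) {s : ℕ} {T T' : Finset κ} (hT : #T = s)
    (hT' : #T' ≤ s) (hdom : ∀ j ∈ T, ∀ k ∈ T', |a k| ≤ |a j|) :
    √(∑ k ∈ T', a k ^ 2) ≤ (∑ j ∈ T, |a j|) / √s := by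
  set μ := (∑ j ∈ T, |a j|) / s
  have hμ : 0 ≤ μ := by positivity
  have hle : ∀ k ∈ T', |a k| ≤ μ := by
    intro k hk
    rcases (Nat.zero_le s).eq_or_lt with hs | hs
    · subst hs; simp_all
    rw [le_div_iff₀ (by exact_mod_cast hs), ← hT, mul_comm, ← nsmul_eq_mul]
    exact card_nsmul_le_sum T _ _ fun j hj => hdom j hj k hk
  calc √(∑ k ∈ T', a k ^ 2) ≤ √(∑ k ∈ T', μ ^ 2) :=
        sqrt_le_sqrt <| sum_le_sum fun k hk => by
          rw [← sq_abs]; exact pow_le_pow_left₀ (abs_nonneg _) (hle k hk) 2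
    _ ≤ √(s * μ ^ 2) := by
        rw [sum_const, nsmul_eq_mul]
        gcongr
    _ = (∑ j ∈ T, |a j|) / √s := by
        rw [sqrt_mul (Nat.cast_nonneg s), sqrt_sq hμ]
        rcases (Nat.cast_nonneg (α := ℝ) s).eq_or_lt with hs | hs
        · simp [← hs]
        simp only [μ]
        field_simp
        rw [sq_sqrt hs.le, mul_comm]

theorem exists_top_superset [DecidableEq κ] {β : Type*} [LinearOrder β] (f : κ → β)
    {R B₀ : Finset κ} (hB₀R : B₀ ⊆ R) (htop : ∀ j ∈ B₀, ∀ k ∈ R \ B₀, f k ≤ f j) {t : ℕ}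
    (hB₀t : #B₀ ≤ t) (htR : t ≤ #R) :
    ∃ B, B₀ ⊆ B ∧ B ⊆ R ∧ #B = t ∧ ∀ j ∈ B, ∀ k ∈ R \ B, f k ≤ f j := by
  induction t with
  | zero => exact ⟨B₀, subset_rfl, hB₀R, Nat.le_zero.1 hB₀t, htop⟩
  | succ t ih =>
    rcases hB₀t.eq_or_lt with hB₀t | hB₀t
    · exact ⟨B₀, subset_rfl, hB₀R, hB₀t, htop⟩
    obtain ⟨B, hB₀B, hBR, hBt, hBtop⟩ := ih (Nat.lt_succ_iff.1 hB₀t) (Nat.le_of_succ_le htR)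
    obtain ⟨a, haRB, hamax⟩ := exists_max_image (R \ B) f <| by
      rw [← card_pos, card_sdiff_of_subset hBR]
      omega
    have haB : a ∉ B := (mem_sdiff.1 haRB).2
    refine ⟨insert a B, hB₀B.trans (subset_insert a B), insert_subset (mem_sdiff.1 haRB).1 hBR,
      by rw [card_insert_of_notMem haB, hBt], fun j hj k hk => ?_⟩
    rw [sdiff_insert] at hk
    rcases mem_insert.1 hj with rfl | hjB
    · exact hamax k (mem_of_mem_erase hk)
    · exact hBtop j hjB k (mem_of_mem_erase hk)

/-- `Φ A` stands for a cross term `|⟨X u, X a_A⟩|`. The blocks of the `s` largest coordinates of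
`Q \ T` are peeled off one at a time, each controlled by the `ℓ¹` norm of the block before it. -/
theorem tail_le_of_subadditive [DecidableEq κ] (a : κ → ℝ) {s : ℕ} (hs : 0 < s) {C : ℝ}
    (hC : 0 ≤ C) (Φ : Finset κ → ℝ) (hΦ : ∀ A B, Disjoint A B → Φ (A ∪ B) ≤ Φ A + Φ B)
    {Q T : Finset κ} (hTQ : T ⊆ Q) (htop : ∀ j ∈ T, ∀ k ∈ Q \ T, |a k| ≤ |a j|)
    (hT : #T = min s #Q) (hΦ_small : ∀ A ⊆ Q \ T, #A ≤ s → Φ A ≤ C * √(∑ k ∈ A, a k ^ 2)) :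
    Φ (Q \ T) ≤ C * ((∑ k ∈ Q, |a k|) / √s) := by
  induction hn : #Q using Nat.strong_induction_on generalizing Q T with
  | _ n ih =>
  rcases (Q \ T).eq_empty_or_nonempty with hQT | hQT
  · have := hΦ_small ∅ (empty_subset _) (by simp)
    rw [hQT]
    simp only [sum_empty, sqrt_zero, mul_zero] at this
    exact this.trans (by positivity)
  have hTs : #T = s := by
    have := card_lt_card ((ssubset_iff_of_subset hTQ).2 (by simpa [Finset.Nonempty] using hQT))
    omega
  obtain ⟨T', -, hT'Q', hT', htop'⟩ := exists_top_superset (|a ·|) (empty_subset (Q \ T))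
    (by simp) (Nat.zero_le _) (min_le_right s #(Q \ T))
  have hQ'n : #(Q \ T) < n := by
    rw [card_sdiff_of_subset hTQ]
    omega
  have htail := ih _ hQ'n hT'Q' htop' hT' (fun A hA => hΦ_small A (hA.trans sdiff_subset)) rfl
  have hhead : Φ T' ≤ C * ((∑ j ∈ T, |a j|) / √s) :=
    (hΦ_small T' hT'Q' (hT' ▸ min_le_left _ _)).trans <| mul_le_mul_of_nonneg_left
      (sqrt_sum_sq_le_sum_abs_div_sqrt a hTs (hT' ▸ min_le_left _ _)
        fun j hj k hk => htop j hj k (hT'Q' hk)) hC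
  calc Φ (Q \ T) = Φ (T' ∪ ((Q \ T) \ T')) := by rw [union_sdiff_of_subset hT'Q']
    _ ≤ Φ T' + Φ ((Q \ T) \ T') := hΦ _ _ disjoint_sdiff
    _ ≤ C * ((∑ j ∈ T, |a j|) / √s) + C * ((∑ k ∈ Q \ T, |a k|) / √s) := add_le_add hhead htail
    _ = C * ((∑ k ∈ Q, |a k|) / √s) := by rw [← sum_sdiff hTQ]; ring

theorem indicator_finset_union [DecidableEq κ] {A B : Finset κ} (hAB : Disjoint A B)
    (h : κ → ℝ) :
    (↑(A ∪ B) : Set κ).indicator h = (↑A : Set κ).indicator h + (↑B : Set κ).indicator h := by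
  rw [coe_union, Set.indicator_union_of_disjoint (disjoint_coe.2 hAB), Pi.add_def]

variable [Fintype κ]

theorem sum_sq_indicator (h : κ → ℝ) (A : Finset κ) :
    ∑ j, (↑A : Set κ).indicator h j ^ 2 = ∑ j ∈ A, h j ^ 2 := by
  rw [← sum_indicator_subset (h · ^ 2) (subset_univ A)]
  congr with j
  by_cases hj : j ∈ A <;> simp [hj]

theorem indicator_union_add_indicator_compl_sdiff [DecidableEq κ] (h : κ → ℝ) (A B : Finset κ) :
    (↑(A ∪ B) : Set κ).indicator h + (↑(Aᶜ \ B) : Set κ).indicator h = h := by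
  have hcover : (A ∪ B) ∪ (Aᶜ \ B) = univ := by
    ext j
    by_cases j ∈ A <;> by_cases j ∈ B <;> simp [*]
  rw [← indicator_finset_union (disjoint_union_left.2
    ⟨disjoint_of_subset_right sdiff_subset disjoint_compl_right, disjoint_sdiff⟩), hcover,
    coe_univ, Set.indicator_univ]

theorem card_filter_ne_zero_le {g : κ → ℝ} {A : Finset κ} (hg : ∀ j ∉ A, g j = 0) :
    #(univ.filter fun j => g j ≠ 0) ≤ #A :=
  card_le_card fun j hj => by_contra fun hjA => (mem_filter.1 hj).2 (hg j hjA)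

theorem eq_zero_of_sum_sq_eq_zero {u : κ → ℝ} (hu : ∑ j, u j ^ 2 = 0) : u = 0 := by
  funext j
  simpa using (sum_eq_zero_iff_of_nonneg fun j _ => sq_nonneg (u j)).1 hu j (mem_univ j)

theorem sum_add_sq (x y : κ → ℝ) :
    ∑ i, (x + y) i ^ 2 = ∑ i, x i ^ 2 + ∑ i, y i ^ 2 + 2 * (x ⬝ᵥ y) := by
  simp only [Pi.add_apply, add_sq, sum_add_distrib, dotProduct, mul_sum, mul_assoc]
  ring

end Sparse

section RIP

variable {ι κ : Type*} [Fintype ι] [Fintype κ]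

def RestrictedIsometry (X : Matrix ι κ ℝ) (k : ℕ) (δ : ℝ) : Prop :=
  ∀ g : κ → ℝ, (univ.filter fun j => g j ≠ 0).card ≤ k →
    (1 - δ) * ∑ j, g j ^ 2 ≤ ∑ i, (X *ᵥ g) i ^ 2 ∧ ∑ i, (X *ᵥ g) i ^ 2 ≤ (1 + δ) * ∑ j, g j ^ 2

variable {X : Matrix ι κ ℝ} {k : ℕ} {δ : ℝ}

theorem RestrictedIsometry.abs_mul_dotProduct_le (hX : RestrictedIsometry X k δ)
    {u v : κ → ℝ} {S T : Finset κ} (hu : ∀ j ∉ S, u j = 0) (hv : ∀ j ∉ T, v j = 0)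
    (hST : Disjoint S T) (hk : #S + #T ≤ k) (a b : ℝ) :
    |a * b * ((X *ᵥ u) ⬝ᵥ (X *ᵥ v))| ≤ δ / 2 * (a ^ 2 * ∑ j, u j ^ 2 + b ^ 2 * ∑ j, v j ^ 2) := by
  classical
  have huv : u ⬝ᵥ v = 0 := sum_eq_zero fun j _ => by
    by_cases hj : j ∈ S
    · rw [hv j (disjoint_left.1 hST hj), mul_zero]
    · rw [hu j hj, zero_mul]
  have hRIP (b : ℝ) := hX (a • u + b • v) <| (card_filter_ne_zero_le (A := S ∪ T) fun j hj => by
      rw [mem_union, not_or] at hj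
      simp [hu j hj.1, hv j hj.2]).trans ((card_union_le S T).trans hk)
  have hp := hRIP b
  have hm := hRIP (-b)
  simp only [mulVec_add, mulVec_smul, sum_add_sq, dotProduct_smul, smul_dotProduct, smul_eq_mul,
    huv, Pi.smul_apply, mul_pow, ← mul_sum] at hp hm
  rw [abs_le]
  constructor <;> nlinarith

theorem RestrictedIsometry.abs_dotProduct_le (hX : RestrictedIsometry X k δ)
    {u v : κ → ℝ} {S T : Finset κ} (hu : ∀ j ∉ S, u j = 0) (hv : ∀ j ∉ T, v j = 0)
    (hST : Disjoint S T) (hk : #S + #T ≤ k) :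
    |(X *ᵥ u) ⬝ᵥ (X *ᵥ v)| ≤ δ * √(∑ j, u j ^ 2) * √(∑ j, v j ^ 2) := by
  rcases (sum_nonneg fun j _ => sq_nonneg (u j)).eq_or_lt with hU | hU
  · simp [eq_zero_of_sum_sq_eq_zero hU.symm]
  rcases (sum_nonneg fun j _ => sq_nonneg (v j)).eq_or_lt with hV | hV
  · simp [eq_zero_of_sum_sq_eq_zero hV.symm]
  have key := hX.abs_mul_dotProduct_le hu hv hST hk √(∑ j, v j ^ 2) √(∑ j, u j ^ 2)
  rw [sq_sqrt hU.le, sq_sqrt hV.le, abs_mul, abs_of_pos (by positivity)] at key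
  refine le_of_mul_le_mul_left (key.trans_eq ?_) (by positivity)
  linear_combination (-δ * ∑ j, v j ^ 2) * sq_sqrt hU.le - δ * √(∑ j, u j ^ 2) ^ 2 * sq_sqrt hV.le

theorem RestrictedIsometry.abs_dotProduct_tail_le [DecidableEq κ] {s : ℕ}
    (hX : RestrictedIsometry X (2 * s) δ) (hδ : 0 ≤ δ) (h : κ → ℝ) {T₀ T₁ : Finset κ}
    (hT₀ : #T₀ ≤ s) (hcone : ∑ j ∈ T₀ᶜ, |h j| ≤ ∑ j ∈ T₀, |h j|) (hT₁T₀ : T₁ ⊆ T₀ᶜ)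
    (hT₁top : ∀ j ∈ T₁, ∀ k ∈ T₀ᶜ \ T₁, |h k| ≤ |h j|) (hT₁ : #T₁ = min s #T₀ᶜ) :
    |(X *ᵥ (↑(T₀ ∪ T₁) : Set κ).indicator h) ⬝ᵥ (X *ᵥ (↑(T₀ᶜ \ T₁) : Set κ).indicator h)| ≤
      √2 * δ * ∑ j ∈ T₀ ∪ T₁, h j ^ 2 := by
  rcases s.eq_zero_or_pos with rfl | hs
  · obtain rfl := card_eq_zero.1 (Nat.le_zero.1 hT₀)
    obtain rfl := card_eq_zero.1 (hT₁.trans (Nat.zero_min _))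
    simp only [empty_union, coe_empty, Set.indicator_empty', mulVec_zero, zero_dotProduct,
      abs_zero, sum_empty, mul_zero, le_refl]
  have hT₀T₁ : Disjoint T₀ T₁ := disjoint_left.2 fun j hj₀ hj₁ => mem_compl.1 (hT₁T₀ hj₁) hj₀
  have hsupp (A : Finset κ) : ∀ j ∉ A, (↑A : Set κ).indicator h j = 0 :=
    fun j hj => Set.indicator_of_notMem (mt mem_coe.1 hj) h
  let Φ (A : Finset κ) : ℝ :=
    |(X *ᵥ (↑T₀ : Set κ).indicator h) ⬝ᵥ (X *ᵥ (↑A : Set κ).indicator h)| +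
      |(X *ᵥ (↑T₁ : Set κ).indicator h) ⬝ᵥ (X *ᵥ (↑A : Set κ).indicator h)|
  have hΦ (A B : Finset κ) (hAB : Disjoint A B) : Φ (A ∪ B) ≤ Φ A + Φ B := by
    simp only [Φ, indicator_finset_union hAB, mulVec_add, dotProduct_add]
    exact (add_le_add (abs_add_le _ _) (abs_add_le _ _)).trans_eq (by ring)
  have hΦ_small (A : Finset κ) (hA : A ⊆ T₀ᶜ \ T₁) (hAs : #A ≤ s) :
      Φ A ≤ δ * (√(∑ j ∈ T₀, h j ^ 2) + √(∑ j ∈ T₁, h j ^ 2)) * √(∑ k ∈ A, h k ^ 2) := by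
    have h₀ := hX.abs_dotProduct_le (hsupp T₀) (hsupp A)
      (disjoint_of_subset_right (hA.trans sdiff_subset) disjoint_compl_right) (by omega)
    have h₁ := hX.abs_dotProduct_le (hsupp T₁) (hsupp A)
      (disjoint_of_subset_right hA disjoint_sdiff) (by omega)
    simp only [sum_sq_indicator] at h₀ h₁
    linarith
  have htail := tail_le_of_subadditive h hs (by positivity) Φ hΦ hT₁T₀ hT₁top hT₁ hΦ_small
  have hcone' : (∑ k ∈ T₀ᶜ, |h k|) / √s ≤ √(∑ j ∈ T₀, h j ^ 2) := by
    rw [div_le_iff₀ (by positivity), mul_comm]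
    exact hcone.trans (sum_abs_le_sqrt_mul_sqrt_sum_sq h hT₀)
  calc _ ≤ Φ (T₀ᶜ \ T₁) := by
        rw [indicator_finset_union hT₀T₁, mulVec_add, add_dotProduct]
        exact abs_add_le _ _
    _ ≤ δ * (√(∑ j ∈ T₀, h j ^ 2) + √(∑ j ∈ T₁, h j ^ 2)) * √(∑ j ∈ T₀, h j ^ 2) := by
        refine htail.trans ?_
        gcongr
    _ = δ * ((√(∑ j ∈ T₀, h j ^ 2) + √(∑ j ∈ T₁, h j ^ 2)) * √(∑ j ∈ T₀, h j ^ 2)) := by ring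
    _ ≤ δ * (√2 * (∑ j ∈ T₀, h j ^ 2 + ∑ j ∈ T₁, h j ^ 2)) :=
        mul_le_mul_of_nonneg_left (sqrt_add_mul_sqrt_le (sum_nonneg fun _ _ => sq_nonneg _)
          (sum_nonneg fun _ _ => sq_nonneg _)) hδ
    _ = √2 * δ * ∑ j ∈ T₀ ∪ T₁, h j ^ 2 := by rw [sum_union hT₀T₁]; ring

theorem RestrictedIsometry.mul_sqrt_sum_sq_le (hX : RestrictedIsometry X k δ) (hδ : 0 ≤ δ)
    {r : ℝ} (hr : 0 ≤ r) (hc : 0 < 1 - (r + 1) * δ) {u w : κ → ℝ}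
    (hu : #(univ.filter fun j => u j ≠ 0) ≤ k)
    (huw : |(X *ᵥ u) ⬝ᵥ (X *ᵥ w)| ≤ r * δ * ∑ j, u j ^ 2) :
    (1 - (r + 1) * δ) * √(∑ j, u j ^ 2) ≤ √(∑ i, (X *ᵥ (u + w)) i ^ 2) := by
  have hu₂ : 0 ≤ ∑ j, u j ^ 2 := sum_nonneg fun _ _ => sq_nonneg _
  have hXu₂ : 0 ≤ ∑ i, (X *ᵥ u) i ^ 2 := sum_nonneg fun _ _ => sq_nonneg _
  have hlow : (1 - δ) * √(∑ j, u j ^ 2) ^ 2 ≤ √(∑ i, (X *ᵥ u) i ^ 2) ^ 2 := by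
    rw [sq_sqrt hu₂, sq_sqrt hXu₂]
    exact (hX u hu).1
  have hcross : √(∑ i, (X *ᵥ u) i ^ 2) ^ 2 - r * δ * √(∑ j, u j ^ 2) ^ 2 ≤
      √(∑ i, (X *ᵥ u) i ^ 2) * √(∑ i, (X *ᵥ (u + w)) i ^ 2) := by
    have hsq : ∑ i, (X *ᵥ u) i ^ 2 = (X *ᵥ u) ⬝ᵥ (X *ᵥ u) := by simp only [dotProduct, sq]
    rw [sq_sqrt hu₂, sq_sqrt hXu₂]
    calc _ ≤ (X *ᵥ u) ⬝ᵥ (X *ᵥ u) + (X *ᵥ u) ⬝ᵥ (X *ᵥ w) := by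
          linarith [neg_abs_le ((X *ᵥ u) ⬝ᵥ (X *ᵥ w))]
      _ = (X *ᵥ u) ⬝ᵥ (X *ᵥ (u + w)) := by rw [mulVec_add, dotProduct_add]
      _ ≤ _ := Real.sum_mul_le_sqrt_mul_sqrt univ _ _
  exact mul_le_of_sq_sub_le_mul hδ hr hc (sqrt_nonneg _) (sqrt_nonneg _) (sqrt_nonneg _) hlow hcross

end RIP

theorem rip_key_inequality_general (n m s : ℕ) (X : Matrix (Fin n) (Fin m) ℝ)
    (δ : ℝ) (hδ0 : 0 ≤ δ)
    (hRIP : ∀ g : Fin m → ℝ, (Finset.univ.filter fun j => g j ≠ 0).card ≤ 2 * s →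
      (1 - δ) * ∑ j, (g j) ^ 2 ≤ (∑ i, ((X *ᵥ g) i) ^ 2) ∧
      (∑ i, ((X *ᵥ g) i) ^ 2) ≤ (1 + δ) * ∑ j, (g j) ^ 2)
    (h : Fin m → ℝ) (T₀ T₁ : Finset (Fin m))
    (hT₀card : T₀.card ≤ s)
    (hcone : (∑ j ∈ T₀ᶜ, |h j|) ≤ ∑ j ∈ T₀, |h j|)
    (hT₁sub : T₁ ⊆ T₀ᶜ) (hT₁card : T₁.card ≤ s)
    (hT₁top : ∀ j ∈ T₁, ∀ k ∈ T₀ᶜ \ T₁, |h k| ≤ |h j|) :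
    (1 - (Real.sqrt 2 + 1) * δ) *
        Real.sqrt (∑ j ∈ T₀ ∪ T₁, (h j) ^ 2) ≤
      Real.sqrt (∑ i, ((X *ᵥ h) i) ^ 2) := by
  rcases le_or_gt (1 - (√2 + 1) * δ) 0 with hc | hc
  · exact (mul_nonpos_of_nonpos_of_nonneg hc (sqrt_nonneg _)).trans (sqrt_nonneg _)
  obtain ⟨T, hT₁T, hTT₀, hT, hTtop⟩ := exists_top_superset (|h ·|) hT₁sub hT₁top
    (le_min hT₁card (card_le_card hT₁sub)) (min_le_right s #T₀ᶜ)
  set u := (↑(T₀ ∪ T) : Set (Fin m)).indicator h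
  set w := (↑(T₀ᶜ \ T) : Set (Fin m)).indicator h
  have hsplit : h = u + w := (indicator_union_add_indicator_compl_sdiff h T₀ T).symm
  have hsparse : #(univ.filter fun j => u j ≠ 0) ≤ 2 * s :=
    (card_filter_ne_zero_le fun j hj => Set.indicator_of_notMem (mt mem_coe.1 hj) h).trans
      ((card_union_le T₀ T).trans (by omega))
  have htail := RestrictedIsometry.abs_dotProduct_tail_le hRIP hδ0 h hT₀card hcone hTT₀ hTtop hT
  rw [← sum_sq_indicator] at htail
  calc _ ≤ (1 - (√2 + 1) * δ) * √(∑ j ∈ T₀ ∪ T, h j ^ 2) := by gcongr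
    _ = (1 - (√2 + 1) * δ) * √(∑ j, u j ^ 2) := by rw [sum_sq_indicator]
    _ ≤ √(∑ i, (X *ᵥ (u + w)) i ^ 2) :=
      RestrictedIsometry.mul_sqrt_sum_sq_le hRIP hδ0 (sqrt_nonneg 2) hc hsparse htail
    _ = _ := by rw [← hsplit]

/-- **Key inequality in the proof that RIP implies the GR condition.** If `X` satisfies RIP
of order `2s` with constant `δ`, `|T₀| ≤ s`, `‖h_{T₀ᶜ}‖₁ ≤ ‖h_{T₀}‖₁`, and `T₁ ⊆ T₀ᶜ`
(with `|T₁| ≤ s`) consists of the `s` largest-magnitude coordinates of `h` on `T₀ᶜ`, then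
`‖Xh‖₂ ≥ (1 − (√2+1)δ)·‖h_{T₀∪T₁}‖₂`. -/
theorem rip_key_inequality (n m s : ℕ) (X : Matrix (Fin n) (Fin m) ℝ)
    (δ : ℝ) (hδ0 : 0 ≤ δ) (hδ1 : δ < 1)
    (hRIP : ∀ g : Fin m → ℝ, (Finset.univ.filter fun j => g j ≠ 0).card ≤ 2 * s →
      (1 - δ) * ∑ j, (g j) ^ 2 ≤ (∑ i, ((X *ᵥ g) i) ^ 2) ∧
      (∑ i, ((X *ᵥ g) i) ^ 2) ≤ (1 + δ) * ∑ j, (g j) ^ 2)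
    (h : Fin m → ℝ) (T₀ T₁ : Finset (Fin m))
    (hT₀card : T₀.card ≤ s)
    (hcone : (∑ j ∈ T₀ᶜ, |h j|) ≤ ∑ j ∈ T₀, |h j|)
    (hT₁sub : T₁ ⊆ T₀ᶜ) (hT₁card : T₁.card ≤ s)
    (hT₁top : ∀ j ∈ T₁, ∀ k ∈ T₀ᶜ \ T₁, |h k| ≤ |h j|) :
    (1 - (Real.sqrt 2 + 1) * δ) *
        Real.sqrt (∑ j ∈ T₀ ∪ T₁, (h j) ^ 2) ≤
      Real.sqrt (∑ i, ((X *ᵥ h) i) ^ 2) :=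
  rip_key_inequality_general n m s X δ hδ0 hRIP h T₀ T₁ hT₀card hcone hT₁sub hT₁card hT₁top
end

section
/- Let h ∈ ℝ^m, s ≥ 1, let T₀ ⊆ {1,…,m}, and let T₁ ⊆ T₀ᶜ with |T₁| = min(s, |T₀ᶜ|) be a set of indices of the s largest-magnitude coordinates of h restricted to T₀ᶜ (i.e. |h_j| ≥ |h_k| for all j ∈ T₁ and k ∈ T₀ᶜ \ T₁). Then ‖h_{(T₀∪T₁)ᶜ}‖₂ ≤ s^{−1/2}·‖h_{T₀ᶜ}‖₁. -/
open Finset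

/-- **Tail estimate for the coordinates outside the top-`s` set.** If `T₁ ⊆ T₀ᶜ` with
`|T₁| = min(s, T₀ᶜ.card)` consists of the `s` largest-magnitude coordinates of `h` on `T₀ᶜ`,
then `‖h_{(T₀∪T₁)ᶜ}‖₂ ≤ s^{−1/2}·‖h_{T₀ᶜ}‖₁`. -/
theorem tail_coordinates_estimate (m s : ℕ) (hs : 1 ≤ s) (h : Fin m → ℝ)
    (T₀ T₁ : Finset (Fin m))
    (hT₁sub : T₁ ⊆ T₀ᶜ) (hT₁card : T₁.card = min s T₀ᶜ.card)
    (hT₁top : ∀ j ∈ T₁, ∀ k ∈ T₀ᶜ \ T₁, |h k| ≤ |h j|) :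
    Real.sqrt (∑ j ∈ (T₀ ∪ T₁)ᶜ, (h j) ^ 2) ≤
      (∑ j ∈ T₀ᶜ, |h j|) / Real.sqrt s := by
  set A : ℝ := ∑ j ∈ T₀ᶜ, |h j| with hA
  have hApos : 0 ≤ A := Finset.sum_nonneg fun j _ => abs_nonneg _
  have hspos : (0:ℝ) < s := by exact_mod_cast hs
  have hcompl : (T₀ ∪ T₁)ᶜ = T₀ᶜ \ T₁ := by
    ext x; simp [Finset.mem_sdiff, Finset.mem_compl, Finset.mem_union]
  -- key pointwise bound
  have key : ∀ k ∈ (T₀ ∪ T₁)ᶜ, |h k| ≤ A / s := by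
    intro k hk
    rw [hcompl] at hk
    have hcard : T₁.card = s := by
      rcases min_cases s T₀ᶜ.card with ⟨h1, _⟩ | ⟨h1, h2⟩
      · rw [hT₁card, h1]
      · exfalso
        have : T₁ = T₀ᶜ := Finset.eq_of_subset_of_card_le hT₁sub (by omega)
        rw [this] at hk
        exact (Finset.mem_sdiff.mp hk).2 (Finset.mem_sdiff.mp hk).1
    have h1 : (s : ℝ) * |h k| ≤ ∑ j ∈ T₁, |h j| := by
      calc (s : ℝ) * |h k| = ∑ _j ∈ T₁, |h k| := by
            rw [Finset.sum_const, hcard, nsmul_eq_mul]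
        _ ≤ ∑ j ∈ T₁, |h j| := Finset.sum_le_sum fun j hj => hT₁top j hj k hk
    have h2 : ∑ j ∈ T₁, |h j| ≤ A :=
      Finset.sum_le_sum_of_subset_of_nonneg hT₁sub fun j _ _ => abs_nonneg _
    rw [le_div_iff₀ hspos]
    linarith
  have hsum : ∑ j ∈ (T₀ ∪ T₁)ᶜ, (h j) ^ 2 ≤ A ^ 2 / s := by
    calc ∑ j ∈ (T₀ ∪ T₁)ᶜ, (h j) ^ 2
        ≤ ∑ j ∈ (T₀ ∪ T₁)ᶜ, (A / s) * |h j| := by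
          refine Finset.sum_le_sum fun j hj => ?_
          have : (h j) ^ 2 = |h j| * |h j| := by rw [← sq_abs]; ring
          rw [this]
          exact mul_le_mul_of_nonneg_right (key j hj) (abs_nonneg _)
      _ = (A / s) * ∑ j ∈ (T₀ ∪ T₁)ᶜ, |h j| := by rw [Finset.mul_sum]
      _ ≤ (A / s) * A := by
          refine mul_le_mul_of_nonneg_left ?_ (by positivity)
          rw [hcompl]
          exact Finset.sum_le_sum_of_subset_of_nonneg (Finset.sdiff_subset)
            fun j _ _ => abs_nonneg _
      _ = A ^ 2 / s := by ring
  calc Real.sqrt (∑ j ∈ (T₀ ∪ T₁)ᶜ, (h j) ^ 2)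
      ≤ Real.sqrt (A ^ 2 / s) := Real.sqrt_le_sqrt hsum
    _ = A / Real.sqrt s := by
        rw [Real.sqrt_div' _ (by positivity), Real.sqrt_sq hApos]
end

section
/- Let X ∈ ℝ^{n×m} satisfy the restricted isometry property of order 2s with constant δ satisfying δ < √2 − 1, let h ∈ ℝ^m, and let T₀ ⊆ {1,…,m} with |T₀| ≤ s satisfy ‖h_{T₀ᶜ}‖₁ ≤ ‖h_{T₀}‖₁. Then ‖Xh‖₂ ≥ ((1 − (√2+1)δ)/2)·‖h‖₂; in particular, if h ≠ 0 then Xh ≠ 0 and XᵀXh ≠ 0, so the generalized restricted constant ρ(X, X, 2, s) is strictly positive. -/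
open Matrix Finset

namespace RIPGR

/-- restriction of a vector to a finset -/
def rstr {m : ℕ} (S : Finset (Fin m)) (h : Fin m → ℝ) : Fin m → ℝ :=
  fun x => if x ∈ S then h x else 0

lemma rstr_support {m : ℕ} (S : Finset (Fin m)) (h : Fin m → ℝ) :
    (Finset.univ.filter fun j => rstr S h j ≠ 0) ⊆ S := by
  intro j hj
  simp only [mem_filter, rstr] at hj
  by_contra hjS
  simp [hjS] at hj

lemma rstr_eq_zero {m : ℕ} {S : Finset (Fin m)} {h : Fin m → ℝ} {x : Fin m}
    (hx : x ∉ S) : rstr S h x = 0 := by simp [rstr, hx]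

lemma rstr_eq {m : ℕ} {S : Finset (Fin m)} {h : Fin m → ℝ} {x : Fin m}
    (hx : x ∈ S) : rstr S h x = h x := by simp [rstr, hx]

lemma rstr_sum_sq {m : ℕ} (S : Finset (Fin m)) (h : Fin m → ℝ) :
    ∑ j, (rstr S h j) ^ 2 = ∑ x ∈ S, (h x) ^ 2 := by
  rw [← Finset.sum_subset (Finset.subset_univ S) (fun x _ hx => by simp [rstr, hx])]
  exact Finset.sum_congr rfl fun x hx => by simp [rstr, hx]

lemma expand_sq {n : ℕ} (a b : Fin n → ℝ) :
    (∑ i, (a i + b i) ^ 2)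
      = (∑ i, (a i) ^ 2) + 2 * (∑ i, a i * b i) + ∑ i, (b i) ^ 2 := by
  rw [Finset.mul_sum, ← Finset.sum_add_distrib, ← Finset.sum_add_distrib]
  exact Finset.sum_congr rfl fun i _ => by ring

lemma expand_sq' {n : ℕ} (a b : Fin n → ℝ) :
    (∑ i, (a i - b i) ^ 2)
      = (∑ i, (a i) ^ 2) - 2 * (∑ i, a i * b i) + ∑ i, (b i) ^ 2 := by
  rw [Finset.mul_sum, ← Finset.sum_sub_distrib, ← Finset.sum_add_distrib]
  exact Finset.sum_congr rfl fun i _ => by ring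

lemma mulVec_comb {n m : ℕ} (X : Matrix (Fin n) (Fin m) ℝ) (α β : ℝ)
    (u v : Fin m → ℝ) (i : Fin n) :
    (X *ᵥ fun j => α * u j + β * v j) i = α * (X *ᵥ u) i + β * (X *ᵥ v) i := by
  simp only [Matrix.mulVec, dotProduct, Finset.mul_sum, ← Finset.sum_add_distrib]
  exact Finset.sum_congr rfl fun j _ => by ring

/-- RIP implies near-orthogonality of images of disjointly supported vectors. -/
lemma inner_bound {n m : ℕ} (s : ℕ) (X : Matrix (Fin n) (Fin m) ℝ) (δ : ℝ)
    (hRIP : ∀ g : Fin m → ℝ, (Finset.univ.filter fun j => g j ≠ 0).card ≤ 2 * s →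
      (1 - δ) * ∑ j, (g j) ^ 2 ≤ (∑ i, ((X *ᵥ g) i) ^ 2) ∧
      (∑ i, ((X *ᵥ g) i) ^ 2) ≤ (1 + δ) * ∑ j, (g j) ^ 2)
    (u v : Fin m → ℝ)
    (hcard : (Finset.univ.filter fun j => u j ≠ 0 ∨ v j ≠ 0).card ≤ 2 * s)
    (hdisj : ∀ j, u j = 0 ∨ v j = 0) :
    |∑ i, (X *ᵥ u) i * (X *ᵥ v) i| ≤
      δ * Real.sqrt (∑ j, (u j) ^ 2) * Real.sqrt (∑ j, (v j) ^ 2) := by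
  set Qu := ∑ j, (u j) ^ 2 with hQu
  set Qv := ∑ j, (v j) ^ 2 with hQv
  have hQu0 : 0 ≤ Qu := Finset.sum_nonneg fun j _ => sq_nonneg _
  have hQv0 : 0 ≤ Qv := Finset.sum_nonneg fun j _ => sq_nonneg _
  rcases eq_or_lt_of_le hQu0 with hQu' | hQu'
  · -- u = 0
    have hu : ∀ j, u j = 0 := by
      intro j
      have := (Finset.sum_eq_zero_iff_of_nonneg
        (fun j _ => sq_nonneg (u j))).1 hQu'.symm j (Finset.mem_univ j)
      exact pow_eq_zero_iff (by norm_num) |>.1 this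
    have hXu : ∀ i, (X *ᵥ u) i = 0 := by
      intro i
      simp only [Matrix.mulVec, dotProduct]
      exact Finset.sum_eq_zero fun j _ => by rw [hu j, mul_zero]
    have : (∑ i, (X *ᵥ u) i * (X *ᵥ v) i) = 0 :=
      Finset.sum_eq_zero fun i _ => by rw [hXu i, zero_mul]
    rw [this, abs_zero, ← hQu', Real.sqrt_zero, mul_zero, zero_mul]
  rcases eq_or_lt_of_le hQv0 with hQv' | hQv'
  · have hv : ∀ j, v j = 0 := by
      intro j
      have := (Finset.sum_eq_zero_iff_of_nonneg
        (fun j _ => sq_nonneg (v j))).1 hQv'.symm j (Finset.mem_univ j)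
      exact pow_eq_zero_iff (by norm_num) |>.1 this
    have hXv : ∀ i, (X *ᵥ v) i = 0 := by
      intro i
      simp only [Matrix.mulVec, dotProduct]
      exact Finset.sum_eq_zero fun j _ => by rw [hv j, mul_zero]
    have : (∑ i, (X *ᵥ u) i * (X *ᵥ v) i) = 0 :=
      Finset.sum_eq_zero fun i _ => by rw [hXv i, mul_zero]
    rw [this, abs_zero, ← hQv', Real.sqrt_zero, mul_zero]
  -- main case
  set α := Real.sqrt Qv with hα
  set β := Real.sqrt Qu with hβ
  have hα0 : 0 < α := Real.sqrt_pos.2 hQv'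
  have hβ0 : 0 < β := Real.sqrt_pos.2 hQu'
  have hα2 : α ^ 2 = Qv := Real.sq_sqrt hQv0
  have hβ2 : β ^ 2 = Qu := Real.sq_sqrt hQu0
  set up : Fin m → ℝ := fun j => α * u j + β * v j with hup
  set um : Fin m → ℝ := fun j => α * u j + (-β) * v j with hum
  have hsupp : ∀ (c d : ℝ), (Finset.univ.filter
      fun j => (c * u j + d * v j) ≠ 0).card ≤ 2 * s := by
    intro c d
    refine le_trans (Finset.card_le_card ?_) hcard
    intro j hj
    simp only [mem_filter, Finset.mem_univ, true_and] at hj ⊢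
    by_contra hc
    push_neg at hc
    rw [hc.1, hc.2] at hj
    simp at hj
  have hcross : ∑ j, u j * v j = 0 :=
    Finset.sum_eq_zero fun j _ => by rcases hdisj j with h' | h' <;> simp [h']
  have hQup : ∑ j, (up j) ^ 2 = 2 * (Qu * Qv) := by
    have := expand_sq (fun j => α * u j) (fun j => β * v j)
    simp only [hup]
    rw [this]
    have e1 : ∑ i, (α * u i) ^ 2 = α ^ 2 * Qu := by
      rw [hQu, Finset.mul_sum]; exact Finset.sum_congr rfl fun i _ => by ring
    have e2 : ∑ i, (β * v i) ^ 2 = β ^ 2 * Qv := by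
      rw [hQv, Finset.mul_sum]; exact Finset.sum_congr rfl fun i _ => by ring
    have e3 : ∑ i, (α * u i) * (β * v i) = α * β * ∑ j, u j * v j := by
      rw [Finset.mul_sum]; exact Finset.sum_congr rfl fun i _ => by ring
    rw [e1, e2, e3, hcross, hα2, hβ2]
    ring
  have hQum : ∑ j, (um j) ^ 2 = 2 * (Qu * Qv) := by
    have := expand_sq (fun j => α * u j) (fun j => (-β) * v j)
    simp only [hum]
    rw [this]
    have e1 : ∑ i, (α * u i) ^ 2 = α ^ 2 * Qu := by
      rw [hQu, Finset.mul_sum]; exact Finset.sum_congr rfl fun i _ => by ring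
    have e2 : ∑ i, ((-β) * v i) ^ 2 = β ^ 2 * Qv := by
      rw [hQv, Finset.mul_sum]; exact Finset.sum_congr rfl fun i _ => by ring
    have e3 : ∑ i, (α * u i) * ((-β) * v i) = (-(α * β)) * ∑ j, u j * v j := by
      rw [Finset.mul_sum]; exact Finset.sum_congr rfl fun i _ => by ring
    rw [e1, e2, e3, hcross, hα2, hβ2]
    ring
  have hXup : ∀ i, (X *ᵥ up) i = α * (X *ᵥ u) i + β * (X *ᵥ v) i :=
    mulVec_comb X α β u v
  have hXum : ∀ i, (X *ᵥ um) i = α * (X *ᵥ u) i + (-β) * (X *ᵥ v) i :=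
    mulVec_comb X α (-β) u v
  set IP := ∑ i, (X *ᵥ u) i * (X *ᵥ v) i with hIP
  have hdiff : (∑ i, ((X *ᵥ up) i) ^ 2) - (∑ i, ((X *ᵥ um) i) ^ 2)
      = 4 * (α * β) * IP := by
    simp only [Finset.mul_sum, ← Finset.sum_sub_distrib, hIP]
    refine Finset.sum_congr rfl fun i _ => ?_
    rw [hXup i, hXum i]
    ring
  obtain ⟨hp1, hp2⟩ := hRIP up (hsupp α β)
  obtain ⟨hm1, hm2⟩ := hRIP um (hsupp α (-β))
  rw [hQup] at hp1 hp2
  rw [hQum] at hm1 hm2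
  have habs : |4 * (α * β) * IP| ≤ 4 * δ * (Qu * Qv) := by
    rw [abs_le]
    constructor
    · nlinarith [hp1, hm2, hdiff]
    · nlinarith [hp2, hm1, hdiff]
  have hab : 0 < α * β := mul_pos hα0 hβ0
  have hQQ : Qu * Qv = (β * α) ^ 2 := by rw [mul_pow, hβ2, hα2]
  have h1 : |4 * (α * β) * IP| = 4 * ((α * β) * |IP|) := by
    rw [abs_mul, abs_mul, abs_of_pos hab, show |(4:ℝ)| = 4 by norm_num]
    ring
  have h2 : (α * β) * |IP| ≤ δ * (Qu * Qv) := by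
    rw [h1] at habs
    linarith
  have hfin : |IP| ≤ δ * β * α := by
    rw [hQQ] at h2
    nlinarith [h2, hab]
  exact hfin

lemma sqrt_add_le {a b : ℝ} (ha : 0 ≤ a) (hb : 0 ≤ b) :
    Real.sqrt a + Real.sqrt b ≤ Real.sqrt 2 * Real.sqrt (a + b) := by
  rw [← Real.sqrt_mul (by norm_num : (0:ℝ) ≤ 2)]
  rw [Real.le_sqrt (by positivity) (by positivity)]
  nlinarith [Real.sq_sqrt ha, Real.sq_sqrt hb, sq_nonneg (Real.sqrt a - Real.sqrt b),
    Real.sqrt_nonneg a, Real.sqrt_nonneg b]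

set_option maxHeartbeats 2000000 in
lemma core {n m : ℕ} (s : ℕ) (X : Matrix (Fin n) (Fin m) ℝ) (δ : ℝ)
    (hδ0 : 0 ≤ δ) (hδ : δ < Real.sqrt 2 - 1)
    (hRIP : ∀ g : Fin m → ℝ, (Finset.univ.filter fun j => g j ≠ 0).card ≤ 2 * s →
      (1 - δ) * ∑ j, (g j) ^ 2 ≤ (∑ i, ((X *ᵥ g) i) ^ 2) ∧
      (∑ i, ((X *ᵥ g) i) ^ 2) ≤ (1 + δ) * ∑ j, (g j) ^ 2)
    (h : Fin m → ℝ) (T₀ : Finset (Fin m)) (hT₀ : T₀.card ≤ s)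
    (hcone : (∑ j ∈ T₀ᶜ, |h j|) ≤ ∑ j ∈ T₀, |h j|) :
    ((1 - (Real.sqrt 2 + 1) * δ) / 2) * Real.sqrt (∑ j, (h j) ^ 2) ≤
      Real.sqrt (∑ i, ((X *ᵥ h) i) ^ 2) := by
  classical
  have h2 : (Real.sqrt 2) ^ 2 = 2 := Real.sq_sqrt (by norm_num)
  have h2pos : 0 < Real.sqrt 2 := Real.sqrt_pos.2 (by norm_num)
  have h2lt : Real.sqrt 2 < 2 := by nlinarith
  have hδ1 : δ < 1 := by nlinarith
  have hγ : 0 < 1 - (Real.sqrt 2 + 1) * δ := by nlinarith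
  by_cases hz : ∀ j ∈ T₀, h j = 0
  · have hT0sum : ∑ j ∈ T₀, |h j| = 0 :=
      Finset.sum_eq_zero fun j hj => by rw [hz j hj, abs_zero]
    have hge : (0:ℝ) ≤ ∑ j ∈ T₀ᶜ, |h j| := Finset.sum_nonneg fun j _ => abs_nonneg _
    have hcz := (Finset.sum_eq_zero_iff_of_nonneg
      fun j (_ : j ∈ T₀ᶜ) => abs_nonneg (h j)).1 (le_antisymm (hT0sum ▸ hcone) hge)
    have hzero : ∀ j, h j = 0 := by
      intro j
      by_cases hj : j ∈ T₀
      · exact hz j hj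
      · exact abs_eq_zero.1 (hcz j (Finset.mem_compl.2 hj))
    have hzz : ∑ j, (h j) ^ 2 = 0 := Finset.sum_eq_zero fun j _ => by rw [hzero j]; ring
    rw [hzz, Real.sqrt_zero, mul_zero]
    exact Real.sqrt_nonneg _
  push_neg at hz
  obtain ⟨j₀, hj₀T, hj₀⟩ := hz
  have hs1 : 1 ≤ s := le_trans (Finset.card_pos.2 ⟨j₀, hj₀T⟩) hT₀
  have hspos : (0 : ℝ) < (s : ℝ) := by exact_mod_cast hs1
  -- sorted enumeration of T₀ᶜ
  obtain ⟨k, hk⟩ : ∃ k, T₀ᶜ.card = k := ⟨_, rfl⟩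
  obtain ⟨a, ha_inj, ha_mem, ha_surj, ha_anti⟩ :
      ∃ a : Fin k → Fin m, Function.Injective a ∧ (∀ i, a i ∈ T₀ᶜ) ∧
        (∀ x ∈ T₀ᶜ, ∃ i, a i = x) ∧
        (∀ i j : Fin k, i ≤ j → |h (a j)| ≤ |h (a i)|) := by
    let e := T₀ᶜ.orderIsoOfFin hk
    let g : Fin k → ℝ := fun i => -|h (e i)|
    let σ := Tuple.sort g
    refine ⟨fun i => (e (σ i) : Fin m), ?_, fun i => (e (σ i)).2, ?_, ?_⟩
    · intro i j hij
      exact σ.injective (e.injective (Subtype.coe_injective hij))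
    · intro x hx
      refine ⟨σ.symm (e.symm ⟨x, hx⟩), ?_⟩
      simp only [Equiv.apply_symm_apply, OrderIso.apply_symm_apply]
    · intro i j hij
      have hmono := Tuple.monotone_sort g hij
      simp only [Function.comp, g] at hmono
      linarith [hmono]
  set I : ℕ → Finset (Fin k) :=
    fun t => Finset.univ.filter (fun i => (i : ℕ) / s = t) with hI
  set B : ℕ → Finset (Fin m) := fun t => (I t).image a with hB
  have hkmem : ∀ t, ∀ i ∈ I t, (i : ℕ) / s = t := by
    intro t i hi
    simpa [hI] using (Finset.mem_filter.1 hi).2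
  have hmemI : ∀ i : Fin k, i ∈ I ((i : ℕ) / s) := by
    intro i; simp [hI]
  have hIbound : ∀ t, ∀ i ∈ I t, t * s ≤ (i : ℕ) ∧ (i : ℕ) < (t + 1) * s := by
    intro t i hi
    have hit := hkmem t i hi
    constructor
    · calc t * s = (i : ℕ) / s * s := by rw [hit]
        _ ≤ (i : ℕ) := Nat.div_mul_le_self _ _
    · exact (Nat.div_lt_iff_lt_mul (by omega : 0 < s)).1 (by omega)
  have hIcoIco : ∀ t, (Finset.Ico (t * s) ((t + 1) * s)).card = s := by
    intro t
    rw [Nat.card_Ico, Nat.succ_mul]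
    omega
  have hIcard : ∀ t, (I t).card ≤ s := by
    intro t
    have hle : (I t).card ≤ (Finset.Ico (t * s) ((t + 1) * s)).card := by
      refine Finset.card_le_card_of_injOn (fun i => (i : ℕ)) ?_ ?_
      · intro i hi
        have hb := hIbound t i hi
        simp [Finset.mem_Ico, hb.1, hb.2]
      · intro i _ j _ hij
        exact Fin.val_injective hij
    rw [hIcoIco t] at hle
    exact hle
  have hIfull : ∀ t, (I (t + 1)).Nonempty → (I t).card = s := by
    rintro t ⟨i, hi⟩
    have hik : (t + 1) * s ≤ (i : ℕ) := (hIbound (t + 1) i hi).1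
    have hikk : (i : ℕ) < k := i.isLt
    have hbd : ∀ u ∈ Finset.Ico (t * s) ((t + 1) * s), u < k := by
      intro u hu
      have := (Finset.mem_Ico.1 hu).2
      omega
    have hIeq : I t = (Finset.Ico (t * s) ((t + 1) * s)).attachFin hbd := by
      ext i'
      simp only [hI, Finset.mem_filter, Finset.mem_univ, true_and,
        Finset.mem_attachFin, Finset.mem_Ico]
      constructor
      · intro h'
        refine ⟨by rw [← h']; exact Nat.div_mul_le_self _ _, ?_⟩
        exact (Nat.div_lt_iff_lt_mul (by omega : 0 < s)).1 (by omega)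
      · rintro ⟨ha1, ha2⟩
        exact Nat.div_eq_of_lt_le ha1 ha2
    rw [hIeq, Finset.card_attachFin, Nat.card_Ico, Nat.succ_mul]
    omega
  have hBsub : ∀ t, B t ⊆ T₀ᶜ := by
    intro t x hx
    obtain ⟨i, _, rfl⟩ := Finset.mem_image.1 hx
    exact ha_mem i
  have hBdisj : ∀ t t', t ≠ t' → Disjoint (B t) (B t') := by
    intro t t' htt
    rw [Finset.disjoint_left]
    intro x hx hx'
    obtain ⟨i, hi, rfl⟩ := Finset.mem_image.1 hx
    obtain ⟨i', hi', hii⟩ := Finset.mem_image.1 hx'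
    cases ha_inj hii
    exact htt ((hkmem t i hi).symm.trans (hkmem t' i hi'))
  have hBcard : ∀ t, (B t).card ≤ s :=
    fun t => le_trans Finset.card_image_le (hIcard t)
  have hBsum : ∀ F : Fin m → ℝ, ∀ t, ∑ x ∈ B t, F x = ∑ i ∈ I t, F (a i) := by
    intro F t
    exact Finset.sum_image fun i _ j _ hij => ha_inj hij
  have himg : Finset.univ.image a = T₀ᶜ := by
    apply Finset.eq_of_subset_of_card_le
    · intro x hx
      obtain ⟨i, _, rfl⟩ := Finset.mem_image.1 hx
      exact ha_mem i
    · rw [Finset.card_image_of_injective _ ha_inj, Finset.card_univ, Fintype.card_fin]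
      exact le_of_eq hk
  have hsum : ∀ F : Fin m → ℝ,
      ∑ x ∈ T₀ᶜ, F x = ∑ t ∈ Finset.range (k + 1), ∑ x ∈ B t, F x := by
    intro F
    have h1 : ∑ x ∈ T₀ᶜ, F x = ∑ i : Fin k, F (a i) := by
      rw [← himg, Finset.sum_image fun i _ j _ hij => ha_inj hij]
    have h2 : ∑ t ∈ Finset.range (k + 1), ∑ i ∈ I t, F (a i) = ∑ i : Fin k, F (a i) := by
      have hfib := Finset.sum_fiberwise_of_maps_to (s := Finset.univ) (g := fun i : Fin k => (i : ℕ) / s)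
        (t := Finset.range (k + 1))
        (fun i _ => Finset.mem_range.2 (by
          show (i : ℕ) / s < k + 1
          have h3 := i.isLt
          have h4 := Nat.div_le_self (i : ℕ) s
          omega))
        (fun i => F (a i))
      simpa [hI] using hfib
    rw [h1, ← h2]
    exact Finset.sum_congr rfl fun t _ => (hBsum F t).symm
  have hdom : ∀ t, ∀ i ∈ I (t + 1), ∀ i' ∈ I t, |h (a i)| ≤ |h (a i')| := by
    intro t i hi i' hi'
    apply ha_anti
    rw [Fin.le_def]
    have h1 := hkmem _ i hi
    have h2 := hkmem _ i' hi'
    by_contra hc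
    push_neg at hc
    have h3 := Nat.div_le_div_right (c := s) (le_of_lt hc)
    omega
  have hdecay : ∀ t, ∑ x ∈ B (t + 1), (h x) ^ 2 ≤ (∑ x ∈ B t, |h x|) ^ 2 / s := by
    intro t
    by_cases hne : (B (t + 1)).Nonempty
    case neg =>
      rw [Finset.not_nonempty_iff_eq_empty.1 hne, Finset.sum_empty]
      positivity
    · have hInon : (I (t + 1)).Nonempty := by
        obtain ⟨x, hx⟩ := hne
        obtain ⟨i, hi, _⟩ := Finset.mem_image.1 hx
        exact ⟨i, hi⟩
      have hcardIt : (I t).card = s := hIfull t hInon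
      have hN10 : (0:ℝ) ≤ ∑ x ∈ B t, |h x| := Finset.sum_nonneg fun x _ => abs_nonneg _
      have hxbound : ∀ x ∈ B (t + 1), (s : ℝ) * |h x| ≤ ∑ x ∈ B t, |h x| := by
        intro x hx
        obtain ⟨i, hi, rfl⟩ := Finset.mem_image.1 hx
        rw [hBsum (fun y => |h y|) t]
        calc (s : ℝ) * |h (a i)| = ∑ _i' ∈ I t, |h (a i)| := by
              rw [Finset.sum_const, hcardIt, nsmul_eq_mul]
          _ ≤ ∑ i' ∈ I t, |h (a i')| :=
              Finset.sum_le_sum fun i' hi' => hdom t i hi i' hi'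
      have hsq : ∀ x ∈ B (t + 1), (h x) ^ 2 ≤ ((∑ x ∈ B t, |h x|) / s) ^ 2 := by
        intro x hx
        have h1 := hxbound x hx
        have h22 : |h x| ≤ (∑ x ∈ B t, |h x|) / s := by
          rw [le_div_iff₀ hspos]; linarith
        calc (h x) ^ 2 = |h x| ^ 2 := (sq_abs _).symm
          _ ≤ ((∑ x ∈ B t, |h x|) / s) ^ 2 := by
              apply pow_le_pow_left₀ (abs_nonneg _) h22
      calc ∑ x ∈ B (t + 1), (h x) ^ 2
          ≤ (B (t + 1)).card • (((∑ x ∈ B t, |h x|) / s) ^ 2) :=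
            Finset.sum_le_card_nsmul _ _ _ hsq
        _ = ((B (t + 1)).card : ℝ) * ((∑ x ∈ B t, |h x|) / s) ^ 2 := nsmul_eq_mul _ _
        _ ≤ (s : ℝ) * ((∑ x ∈ B t, |h x|) / s) ^ 2 := by
            apply mul_le_mul_of_nonneg_right _ (by positivity)
            exact_mod_cast hBcard (t + 1)
        _ = (∑ x ∈ B t, |h x|) ^ 2 / s := by
            field_simp
  -- basic quantities
  set QT := ∑ x ∈ T₀, (h x) ^ 2 with hQT
  set QB0 := ∑ x ∈ B 0, (h x) ^ 2 with hQB0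
  have hQT0 : 0 ≤ QT := Finset.sum_nonneg fun x _ => sq_nonneg _
  have hQB00 : 0 ≤ QB0 := Finset.sum_nonneg fun x _ => sq_nonneg _
  have hQTpos : 0 < QT :=
    Finset.sum_pos' (fun x _ => sq_nonneg _) ⟨j₀, hj₀T, by positivity⟩
  set E := T₀ ∪ B 0 with hE
  set u := rstr E h with hu
  have hdisjTB : Disjoint T₀ (B 0) := by
    rw [Finset.disjoint_left]
    intro x hx hx'
    exact (Finset.mem_compl.1 (hBsub 0 hx')) hx
  have hEcard : E.card ≤ 2 * s := by
    rw [hE]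
    have h1 := Finset.card_union_le T₀ (B 0)
    have h2 := hBcard 0
    omega
  have hQu : ∑ j, (u j) ^ 2 = QT + QB0 := by
    rw [hu, rstr_sum_sq, hE, Finset.sum_union hdisjTB, hQT, hQB0]
  have hQupos : 0 < QT + QB0 := by linarith
  have hsuppu : (Finset.univ.filter fun j => u j ≠ 0).card ≤ 2 * s := by
    refine le_trans (Finset.card_le_card ?_) hEcard
    rw [hu]; exact rstr_support E h
  obtain ⟨hA1, hA2⟩ := hRIP u hsuppu
  rw [hQu] at hA1 hA2
  set r : ℕ → Fin m → ℝ := fun t => rstr (B (t + 1)) h with hr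
  have hdecomp : ∀ x, h x = u x + ∑ t ∈ Finset.range k, r t x := by
    intro x
    by_cases hxT : x ∈ T₀
    · rw [hu, rstr_eq (Finset.mem_union_left _ hxT)]
      rw [Finset.sum_eq_zero fun t _ =>
        rstr_eq_zero (fun hc => (Finset.mem_compl.1 (hBsub (t + 1) hc)) hxT)]
      ring
    · have hxc : x ∈ T₀ᶜ := Finset.mem_compl.2 hxT
      obtain ⟨i, rfl⟩ := ha_surj x hxc
      have hxB : a i ∈ B ((i : ℕ) / s) := Finset.mem_image_of_mem a (hmemI i)
      by_cases ht0 : (i : ℕ) / s = 0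
      · rw [ht0] at hxB
        rw [hu, rstr_eq (Finset.mem_union_right _ hxB)]
        rw [Finset.sum_eq_zero fun t _ => rstr_eq_zero (fun hc =>
          Finset.disjoint_left.1 (hBdisj 0 (t + 1) (by omega)) hxB hc)]
        ring
      · obtain ⟨t₀, ht₀⟩ := Nat.exists_eq_succ_of_ne_zero ht0
        have hxB0 : a i ∈ B (t₀ + 1) := by
          have he1 : (i : ℕ) / s = t₀ + 1 := by omega
          rw [← he1]; exact hxB
        have huz : u (a i) = 0 := by
          rw [hu]
          apply rstr_eq_zero
          rw [hE]
          intro hc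
          rcases Finset.mem_union.1 hc with hc1 | hc1
          · exact hxT hc1
          · exact Finset.disjoint_left.1 (hBdisj (t₀ + 1) 0 (by omega)) hxB0 hc1
        have ht₀k : t₀ ∈ Finset.range k := by
          have h1 : (i : ℕ) / s ≤ (i : ℕ) := Nat.div_le_self _ _
          have h2 : (i : ℕ) < k := i.isLt
          exact Finset.mem_range.2 (by omega)
        rw [huz, Finset.sum_eq_single_of_mem t₀ ht₀k ?_]
        · rw [hr]
          simp only
          rw [rstr_eq hxB0]
          ring
        · intro t _ htn
          exact rstr_eq_zero (fun hc =>
            Finset.disjoint_left.1 (hBdisj (t + 1) (t₀ + 1) (by omega)) hc hxB0)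
  have hXdecomp : ∀ i0, (X *ᵥ h) i0 = (X *ᵥ u) i0 + ∑ t ∈ Finset.range k, (X *ᵥ r t) i0 := by
    intro i0
    simp only [Matrix.mulVec, dotProduct]
    rw [Finset.sum_comm, ← Finset.sum_add_distrib]
    refine Finset.sum_congr rfl fun j _ => ?_
    rw [hdecomp j, mul_add, Finset.mul_sum]
  have hIPsplit : ∑ i0, (X *ᵥ u) i0 * (X *ᵥ h) i0
      = (∑ i0, ((X *ᵥ u) i0) ^ 2)
        + ∑ t ∈ Finset.range k, ∑ i0, (X *ᵥ u) i0 * (X *ᵥ r t) i0 := by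
    calc ∑ i0, (X *ᵥ u) i0 * (X *ᵥ h) i0
        = ∑ i0, (((X *ᵥ u) i0) ^ 2
            + ∑ t ∈ Finset.range k, (X *ᵥ u) i0 * (X *ᵥ r t) i0) := by
          refine Finset.sum_congr rfl fun i0 _ => ?_
          rw [hXdecomp i0, mul_add, Finset.mul_sum, ← sq]
      _ = (∑ i0, ((X *ᵥ u) i0) ^ 2)
            + ∑ i0, ∑ t ∈ Finset.range k, (X *ᵥ u) i0 * (X *ᵥ r t) i0 :=
          Finset.sum_add_distrib
      _ = _ := by rw [Finset.sum_comm]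
  have hXu_split : ∀ i0, (X *ᵥ u) i0 = (X *ᵥ rstr T₀ h) i0 + (X *ᵥ rstr (B 0) h) i0 := by
    intro i0
    have hueq : u = fun j => 1 * rstr T₀ h j + 1 * rstr (B 0) h j := by
      funext j
      simp only [one_mul]
      by_cases hj : j ∈ T₀
      · rw [hu, rstr_eq (Finset.mem_union_left _ hj), rstr_eq hj,
          rstr_eq_zero (Finset.disjoint_left.1 hdisjTB hj)]
        ring
      · by_cases hj' : j ∈ B 0
        · rw [hu, rstr_eq (Finset.mem_union_right _ hj'), rstr_eq hj', rstr_eq_zero hj]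
          ring
        · rw [hu, rstr_eq_zero (fun hc => by
            rcases Finset.mem_union.1 hc with h1 | h1
            · exact hj h1
            · exact hj' h1), rstr_eq_zero hj, rstr_eq_zero hj']
          ring
    rw [hueq, mulVec_comb X 1 1 (rstr T₀ h) (rstr (B 0) h) i0]
    ring
  have hcross : ∀ t ∈ Finset.range k,
      |∑ i0, (X *ᵥ u) i0 * (X *ᵥ r t) i0|
        ≤ δ * (Real.sqrt QT + Real.sqrt QB0) * Real.sqrt (∑ x ∈ B (t + 1), (h x) ^ 2) := by
    intro t _
    have hsplit : ∑ i0, (X *ᵥ u) i0 * (X *ᵥ r t) i0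
        = (∑ i0, (X *ᵥ rstr T₀ h) i0 * (X *ᵥ r t) i0)
          + ∑ i0, (X *ᵥ rstr (B 0) h) i0 * (X *ᵥ r t) i0 := by
      rw [← Finset.sum_add_distrib]
      exact Finset.sum_congr rfl fun i0 _ => by rw [hXu_split i0]; ring
    have hcard1 : (Finset.univ.filter fun j => rstr T₀ h j ≠ 0 ∨ r t j ≠ 0).card ≤ 2 * s := by
      have hsub : (Finset.univ.filter fun j => rstr T₀ h j ≠ 0 ∨ r t j ≠ 0)
          ⊆ T₀ ∪ B (t + 1) := by
        intro j hj
        rcases (Finset.mem_filter.1 hj).2 with hc | hc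
        · exact Finset.mem_union_left _
            (rstr_support T₀ h (Finset.mem_filter.2 ⟨Finset.mem_univ j, hc⟩))
        · exact Finset.mem_union_right _
            (rstr_support (B (t + 1)) h (Finset.mem_filter.2 ⟨Finset.mem_univ j, hc⟩))
      refine le_trans (Finset.card_le_card hsub) ?_
      have h1 := Finset.card_union_le T₀ (B (t + 1))
      have h2 := hBcard (t + 1)
      omega
    have hcard2 : (Finset.univ.filter fun j => rstr (B 0) h j ≠ 0 ∨ r t j ≠ 0).card ≤ 2 * s := by
      have hsub : (Finset.univ.filter fun j => rstr (B 0) h j ≠ 0 ∨ r t j ≠ 0)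
          ⊆ B 0 ∪ B (t + 1) := by
        intro j hj
        rcases (Finset.mem_filter.1 hj).2 with hc | hc
        · exact Finset.mem_union_left _
            (rstr_support (B 0) h (Finset.mem_filter.2 ⟨Finset.mem_univ j, hc⟩))
        · exact Finset.mem_union_right _
            (rstr_support (B (t + 1)) h (Finset.mem_filter.2 ⟨Finset.mem_univ j, hc⟩))
      refine le_trans (Finset.card_le_card hsub) ?_
      have h1 := Finset.card_union_le (B 0) (B (t + 1))
      have h2 := hBcard (t + 1)
      have h3 := hBcard 0
      omega
    have hdisj1 : ∀ j, rstr T₀ h j = 0 ∨ r t j = 0 := by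
      intro j
      by_cases hj : j ∈ T₀
      · exact Or.inr (rstr_eq_zero fun hc =>
          (Finset.mem_compl.1 (hBsub (t + 1) hc)) hj)
      · exact Or.inl (rstr_eq_zero hj)
    have hdisj2 : ∀ j, rstr (B 0) h j = 0 ∨ r t j = 0 := by
      intro j
      by_cases hj : j ∈ B 0
      · exact Or.inr (rstr_eq_zero fun hc =>
          Finset.disjoint_left.1 (hBdisj 0 (t + 1) (by omega)) hj hc)
      · exact Or.inl (rstr_eq_zero hj)
    have h1 := inner_bound s X δ hRIP (rstr T₀ h) (r t) hcard1 hdisj1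
    have h2 := inner_bound s X δ hRIP (rstr (B 0) h) (r t) hcard2 hdisj2
    rw [rstr_sum_sq] at h1 h2
    have hrt : ∑ j, (r t j) ^ 2 = ∑ x ∈ B (t + 1), (h x) ^ 2 := rstr_sum_sq _ _
    rw [hrt] at h1 h2
    calc |∑ i0, (X *ᵥ u) i0 * (X *ᵥ r t) i0|
        ≤ |∑ i0, (X *ᵥ rstr T₀ h) i0 * (X *ᵥ r t) i0|
          + |∑ i0, (X *ᵥ rstr (B 0) h) i0 * (X *ᵥ r t) i0| := by
          rw [hsplit]; exact abs_add_le _ _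
      _ ≤ δ * Real.sqrt QT * Real.sqrt (∑ x ∈ B (t + 1), (h x) ^ 2)
          + δ * Real.sqrt QB0 * Real.sqrt (∑ x ∈ B (t + 1), (h x) ^ 2) := add_le_add h1 h2
      _ = _ := by ring
  -- tail sums
  have hTSle : (∑ t ∈ Finset.range k, Real.sqrt (∑ x ∈ B (t + 1), (h x) ^ 2))
      ≤ Real.sqrt QT := by
    have hstep : ∀ t, Real.sqrt (∑ x ∈ B (t + 1), (h x) ^ 2)
        ≤ (∑ x ∈ B t, |h x|) / Real.sqrt s := by
      intro t
      have hle := Real.sqrt_le_sqrt (hdecay t)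
      rwa [Real.sqrt_div (sq_nonneg _),
        Real.sqrt_sq (Finset.sum_nonneg fun x _ => abs_nonneg _)] at hle
    have hsq : (0:ℝ) < Real.sqrt s := Real.sqrt_pos.2 hspos
    have h1 : (∑ t ∈ Finset.range k, Real.sqrt (∑ x ∈ B (t + 1), (h x) ^ 2))
        ≤ (∑ t ∈ Finset.range k, ∑ x ∈ B t, |h x|) / Real.sqrt s := by
      rw [Finset.sum_div]
      exact Finset.sum_le_sum fun t _ => hstep t
    have h2 : ∑ t ∈ Finset.range k, ∑ x ∈ B t, |h x| ≤ ∑ x ∈ T₀ᶜ, |h x| := by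
      rw [hsum (fun x => |h x|), Finset.sum_range_succ]
      have h3 : (0:ℝ) ≤ ∑ x ∈ B k, |h x| := Finset.sum_nonneg fun x _ => abs_nonneg _
      linarith
    have h3 : ∑ x ∈ T₀, |h x| ≤ Real.sqrt s * Real.sqrt QT := by
      have hcs := sq_sum_le_card_mul_sum_sq (s := T₀) (f := fun x => |h x|)
      have habs2 : ∑ x ∈ T₀, |h x| ^ 2 = QT := by
        rw [hQT]; exact Finset.sum_congr rfl fun x _ => sq_abs _
      rw [habs2] at hcs
      have hcard : (T₀.card : ℝ) ≤ s := by exact_mod_cast hT₀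
      have h4 : (∑ x ∈ T₀, |h x|) ^ 2 ≤ s * QT :=
        le_trans hcs (mul_le_mul_of_nonneg_right hcard hQT0)
      have hnn : (0:ℝ) ≤ ∑ x ∈ T₀, |h x| := Finset.sum_nonneg fun x _ => abs_nonneg _
      calc ∑ x ∈ T₀, |h x| = Real.sqrt ((∑ x ∈ T₀, |h x|) ^ 2) := (Real.sqrt_sq hnn).symm
        _ ≤ Real.sqrt ((s : ℝ) * QT) := Real.sqrt_le_sqrt h4
        _ = Real.sqrt s * Real.sqrt QT := Real.sqrt_mul (le_of_lt hspos) _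
    calc (∑ t ∈ Finset.range k, Real.sqrt (∑ x ∈ B (t + 1), (h x) ^ 2))
        ≤ (∑ t ∈ Finset.range k, ∑ x ∈ B t, |h x|) / Real.sqrt s := h1
      _ ≤ (∑ x ∈ T₀ᶜ, |h x|) / Real.sqrt s := by gcongr
      _ ≤ (∑ x ∈ T₀, |h x|) / Real.sqrt s := by gcongr
      _ ≤ (Real.sqrt s * Real.sqrt QT) / Real.sqrt s := by gcongr
      _ = Real.sqrt QT := by field_simp
  have hTail2 : ∑ x ∈ T₀ᶜ, (h x) ^ 2 ≤ QB0 + QT := by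
    rw [hsum (fun x => (h x) ^ 2), Finset.sum_range_succ']
    have h1 : ∑ t ∈ Finset.range k, ∑ x ∈ B (t + 1), (h x) ^ 2
        ≤ (∑ t ∈ Finset.range k, Real.sqrt (∑ x ∈ B (t + 1), (h x) ^ 2)) ^ 2 := by
      have heq : ∀ t ∈ Finset.range k, ∑ x ∈ B (t + 1), (h x) ^ 2
          = (Real.sqrt (∑ x ∈ B (t + 1), (h x) ^ 2)) ^ 2 :=
        fun t _ => (Real.sq_sqrt (Finset.sum_nonneg fun x _ => sq_nonneg _)).symm
      rw [Finset.sum_congr rfl heq]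
      exact Finset.sum_sq_le_sq_sum_of_nonneg fun t _ => Real.sqrt_nonneg _
    have h2 : (∑ t ∈ Finset.range k, Real.sqrt (∑ x ∈ B (t + 1), (h x) ^ 2)) ^ 2 ≤ QT := by
      have hTS0 : (0:ℝ) ≤ ∑ t ∈ Finset.range k, Real.sqrt (∑ x ∈ B (t + 1), (h x) ^ 2) :=
        Finset.sum_nonneg fun t _ => Real.sqrt_nonneg _
      nlinarith [hTSle, hTS0, Real.sq_sqrt hQT0, Real.sqrt_nonneg QT]
    linarith
  have hQtot : ∑ j, (h j) ^ 2 ≤ 2 * (QT + QB0) := by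
    rw [← Finset.sum_add_sum_compl T₀ (fun j => (h j) ^ 2)]
    linarith [hTail2]
  -- Cauchy–Schwarz and endgame
  have hW0 : (0:ℝ) ≤ ∑ i0, ((X *ᵥ h) i0) ^ 2 := Finset.sum_nonneg fun i0 _ => sq_nonneg _
  have hA0 : (0:ℝ) ≤ ∑ i0, ((X *ᵥ u) i0) ^ 2 := Finset.sum_nonneg fun i0 _ => sq_nonneg _
  have hCS : ∑ i0, (X *ᵥ u) i0 * (X *ᵥ h) i0
      ≤ Real.sqrt (∑ i0, ((X *ᵥ u) i0) ^ 2) * Real.sqrt (∑ i0, ((X *ᵥ h) i0) ^ 2) := by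
    have hcs := Finset.sum_mul_sq_le_sq_mul_sq Finset.univ
      (fun i0 => (X *ᵥ u) i0) (fun i0 => (X *ᵥ h) i0)
    calc ∑ i0, (X *ᵥ u) i0 * (X *ᵥ h) i0 ≤ |∑ i0, (X *ᵥ u) i0 * (X *ᵥ h) i0| := le_abs_self _
      _ = Real.sqrt ((∑ i0, (X *ᵥ u) i0 * (X *ᵥ h) i0) ^ 2) := (Real.sqrt_sq_eq_abs _).symm
      _ ≤ Real.sqrt ((∑ i0, ((X *ᵥ u) i0) ^ 2) * ∑ i0, ((X *ᵥ h) i0) ^ 2) :=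
          Real.sqrt_le_sqrt hcs
      _ = _ := Real.sqrt_mul hA0 _
  have hsumcross : |∑ t ∈ Finset.range k, ∑ i0, (X *ᵥ u) i0 * (X *ᵥ r t) i0|
      ≤ δ * (Real.sqrt QT + Real.sqrt QB0) * Real.sqrt QT := by
    calc |∑ t ∈ Finset.range k, ∑ i0, (X *ᵥ u) i0 * (X *ᵥ r t) i0|
        ≤ ∑ t ∈ Finset.range k, |∑ i0, (X *ᵥ u) i0 * (X *ᵥ r t) i0| :=
          Finset.abs_sum_le_sum_abs _ _
      _ ≤ ∑ t ∈ Finset.range k,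
            δ * (Real.sqrt QT + Real.sqrt QB0) * Real.sqrt (∑ x ∈ B (t + 1), (h x) ^ 2) :=
          Finset.sum_le_sum hcross
      _ = δ * (Real.sqrt QT + Real.sqrt QB0)
            * ∑ t ∈ Finset.range k, Real.sqrt (∑ x ∈ B (t + 1), (h x) ^ 2) := by
          rw [Finset.mul_sum]
      _ ≤ δ * (Real.sqrt QT + Real.sqrt QB0) * Real.sqrt QT := by
          apply mul_le_mul_of_nonneg_left hTSle
          positivity
  have hnTnB : Real.sqrt QT + Real.sqrt QB0 ≤ Real.sqrt 2 * Real.sqrt (QT + QB0) :=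
    sqrt_add_le hQT0 hQB00
  have hnTle : Real.sqrt QT ≤ Real.sqrt (QT + QB0) := Real.sqrt_le_sqrt (by linarith)
  have hQu_sq : (Real.sqrt (QT + QB0)) ^ 2 = QT + QB0 := Real.sq_sqrt (le_of_lt hQupos)
  have hnQu : 0 < Real.sqrt (QT + QB0) := Real.sqrt_pos.2 hQupos
  have hlow : (1 - (Real.sqrt 2 + 1) * δ) * (QT + QB0)
      ≤ ∑ i0, (X *ᵥ u) i0 * (X *ᵥ h) i0 := by
    have hcb : δ * (Real.sqrt QT + Real.sqrt QB0) * Real.sqrt QT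
        ≤ δ * (Real.sqrt 2 * Real.sqrt (QT + QB0)) * Real.sqrt (QT + QB0) := by
      apply mul_le_mul
      · exact mul_le_mul_of_nonneg_left hnTnB hδ0
      · exact hnTle
      · exact Real.sqrt_nonneg _
      · positivity
    have hcb2 : δ * (Real.sqrt 2 * Real.sqrt (QT + QB0)) * Real.sqrt (QT + QB0)
        = Real.sqrt 2 * δ * (QT + QB0) := by
      calc δ * (Real.sqrt 2 * Real.sqrt (QT + QB0)) * Real.sqrt (QT + QB0)
          = Real.sqrt 2 * δ * (Real.sqrt (QT + QB0) * Real.sqrt (QT + QB0)) := by ring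
        _ = Real.sqrt 2 * δ * (QT + QB0) := by
            rw [Real.mul_self_sqrt (le_of_lt hQupos)]
    have hlow1 : (∑ i0, ((X *ᵥ u) i0) ^ 2)
        - δ * (Real.sqrt QT + Real.sqrt QB0) * Real.sqrt QT
        ≤ ∑ i0, (X *ᵥ u) i0 * (X *ᵥ h) i0 := by
      rw [hIPsplit]
      have := neg_abs_le (∑ t ∈ Finset.range k, ∑ i0, (X *ᵥ u) i0 * (X *ᵥ r t) i0)
      linarith [hsumcross]
    nlinarith [hA1, hlow1, hcb, hcb2]
  have hApos : 0 < ∑ i0, ((X *ᵥ u) i0) ^ 2 :=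
    lt_of_lt_of_le (by nlinarith) hA1
  have hsA : Real.sqrt (∑ i0, ((X *ᵥ u) i0) ^ 2)
      ≤ Real.sqrt (1 + δ) * Real.sqrt (QT + QB0) := by
    calc Real.sqrt (∑ i0, ((X *ᵥ u) i0) ^ 2) ≤ Real.sqrt ((1 + δ) * (QT + QB0)) :=
        Real.sqrt_le_sqrt hA2
      _ = _ := Real.sqrt_mul (by linarith) _
  have hsW0 : (0:ℝ) ≤ Real.sqrt (∑ i0, ((X *ᵥ h) i0) ^ 2) := Real.sqrt_nonneg _
  have g1 : (1 - (Real.sqrt 2 + 1) * δ) * Real.sqrt (QT + QB0)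
      ≤ Real.sqrt (1 + δ) * Real.sqrt (∑ i0, ((X *ᵥ h) i0) ^ 2) := by
    have e1 : Real.sqrt (∑ i0, ((X *ᵥ u) i0) ^ 2) * Real.sqrt (∑ i0, ((X *ᵥ h) i0) ^ 2)
        ≤ (Real.sqrt (1 + δ) * Real.sqrt (QT + QB0)) * Real.sqrt (∑ i0, ((X *ᵥ h) i0) ^ 2) :=
      mul_le_mul_of_nonneg_right hsA hsW0
    nlinarith [hlow, hCS, e1, hQu_sq, hnQu, hsW0]
  have hs1δ : Real.sqrt 2 * Real.sqrt (1 + δ) ≤ 2 := by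
    have h1δ : Real.sqrt (1 + δ) ^ 2 = 1 + δ := Real.sq_sqrt (by linarith)
    nlinarith [Real.sqrt_nonneg (1 + δ), h2pos, h2]
  have hQtot_sqrt : Real.sqrt (∑ j, (h j) ^ 2) ≤ Real.sqrt 2 * Real.sqrt (QT + QB0) := by
    calc Real.sqrt (∑ j, (h j) ^ 2) ≤ Real.sqrt (2 * (QT + QB0)) := Real.sqrt_le_sqrt hQtot
      _ = _ := Real.sqrt_mul (by norm_num) _
  have e2 : ((1 - (Real.sqrt 2 + 1) * δ) / 2) * Real.sqrt (∑ j, (h j) ^ 2)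
      ≤ ((1 - (Real.sqrt 2 + 1) * δ) / 2) * (Real.sqrt 2 * Real.sqrt (QT + QB0)) :=
    mul_le_mul_of_nonneg_left hQtot_sqrt (by positivity)
  have e3 : Real.sqrt 2 * ((1 - (Real.sqrt 2 + 1) * δ) * Real.sqrt (QT + QB0))
      ≤ Real.sqrt 2 * (Real.sqrt (1 + δ) * Real.sqrt (∑ i0, ((X *ᵥ h) i0) ^ 2)) :=
    mul_le_mul_of_nonneg_left g1 (le_of_lt h2pos)
  have e4 : Real.sqrt 2 * Real.sqrt (1 + δ) * Real.sqrt (∑ i0, ((X *ᵥ h) i0) ^ 2)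
      ≤ 2 * Real.sqrt (∑ i0, ((X *ᵥ h) i0) ^ 2) :=
    mul_le_mul_of_nonneg_right hs1δ hsW0
  nlinarith [e2, e3, e4]

lemma dot_key {n m : ℕ} (X : Matrix (Fin n) (Fin m) ℝ) (h : Fin m → ℝ) :
    ∑ j, h j * (Xᵀ *ᵥ (X *ᵥ h)) j = ∑ i, ((X *ᵥ h) i) ^ 2 := by
  have h1 : h ⬝ᵥ (Xᵀ *ᵥ (X *ᵥ h)) = (h ᵥ* Xᵀ) ⬝ᵥ (X *ᵥ h) :=
    Matrix.dotProduct_mulVec _ _ _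
  rw [Matrix.vecMul_transpose] at h1
  simpa [dotProduct, sq] using h1

end RIPGR

/-- **RIP implies the GR condition.** If `X` satisfies RIP of order `2s` with constant
`δ < √2 − 1`, then every `h` in the cone `‖h_{T₀ᶜ}‖₁ ≤ ‖h_{T₀}‖₁` (for some `|T₀| ≤ s`)
satisfies `‖Xh‖₂ ≥ ((1 − (√2+1)δ)/2)‖h‖₂`; in particular `h ≠ 0` implies `Xh ≠ 0` and
`XᵀXh ≠ 0`, and the generalized restricted constant `ρ(X, X, 2, s)` is strictly positive. -/
theorem rip_implies_gr (n m s : ℕ) (X : Matrix (Fin n) (Fin m) ℝ)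
    (δ : ℝ) (hδ0 : 0 ≤ δ) (hδ : δ < Real.sqrt 2 - 1)
    (hRIP : ∀ g : Fin m → ℝ, (Finset.univ.filter fun j => g j ≠ 0).card ≤ 2 * s →
      (1 - δ) * ∑ j, (g j) ^ 2 ≤ (∑ i, ((X *ᵥ g) i) ^ 2) ∧
      (∑ i, ((X *ᵥ g) i) ^ 2) ≤ (1 + δ) * ∑ j, (g j) ^ 2) :
    (∀ (h : Fin m → ℝ) (T₀ : Finset (Fin m)), T₀.card ≤ s →
      (∑ j ∈ T₀ᶜ, |h j|) ≤ (∑ j ∈ T₀, |h j|) →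
      ((1 - (Real.sqrt 2 + 1) * δ) / 2) * Real.sqrt (∑ j, (h j) ^ 2) ≤
          Real.sqrt (∑ i, ((X *ᵥ h) i) ^ 2) ∧
        (h ≠ 0 → X *ᵥ h ≠ 0 ∧ Xᵀ *ᵥ (X *ᵥ h) ≠ 0)) ∧
    ∃ ρ > (0 : ℝ), ∀ (h : Fin m → ℝ) (T₀ : Finset (Fin m)), T₀.card ≤ s → h ≠ 0 →
      (∑ j ∈ T₀ᶜ, |h j|) ≤ (∑ j ∈ T₀, |h j|) →
      ρ * Real.sqrt (∑ j, (h j) ^ 2) ≤ ⨆ i, |(Xᵀ *ᵥ (X *ᵥ h)) i| := by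
  classical
  have h2 : (Real.sqrt 2) ^ 2 = 2 := Real.sq_sqrt (by norm_num)
  have h2pos : 0 < Real.sqrt 2 := Real.sqrt_pos.2 (by norm_num)
  have hγ : 0 < (1 - (Real.sqrt 2 + 1) * δ) / 2 := by nlinarith
  constructor
  · intro h T₀ hT₀ hcone
    have hcore := RIPGR.core s X δ hδ0 hδ hRIP h T₀ hT₀ hcone
    refine ⟨hcore, ?_⟩
    intro hne
    obtain ⟨j₁, hj₁⟩ : ∃ j, h j ≠ 0 := by
      by_contra hcon
      push_neg at hcon
      exact hne (funext hcon)
    have hpos : 0 < ∑ j, (h j) ^ 2 :=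
      Finset.sum_pos' (fun j _ => sq_nonneg _) ⟨j₁, Finset.mem_univ _, by positivity⟩
    have hsq : 0 < Real.sqrt (∑ j, (h j) ^ 2) := Real.sqrt_pos.2 hpos
    have hWpos : 0 < ∑ i, ((X *ᵥ h) i) ^ 2 := by
      have h1 : 0 < Real.sqrt (∑ i, ((X *ᵥ h) i) ^ 2) :=
        lt_of_lt_of_le (by positivity) hcore
      exact Real.sqrt_pos.1 h1
    have hXh : X *ᵥ h ≠ 0 := by
      intro hcon
      rw [hcon] at hWpos
      simp at hWpos
    refine ⟨hXh, ?_⟩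
    intro hcon
    have hkey := RIPGR.dot_key X h
    rw [hcon] at hkey
    simp only [Pi.zero_apply, mul_zero, Finset.sum_const_zero] at hkey
    rw [← hkey] at hWpos
    exact lt_irrefl _ hWpos
  · have hsps : (0:ℝ) < Real.sqrt ((s : ℝ) + 1) := Real.sqrt_pos.2 (by positivity)
    refine ⟨((1 - (Real.sqrt 2 + 1) * δ) / 2) ^ 2 / (2 * Real.sqrt ((s : ℝ) + 1)),
      by positivity, ?_⟩
    intro h T₀ hT₀ hne hcone
    have hcore := RIPGR.core s X δ hδ0 hδ hRIP h T₀ hT₀ hcone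
    obtain ⟨j₁, hj₁⟩ : ∃ j, h j ≠ 0 := by
      by_contra hcon
      push_neg at hcon
      exact hne (funext hcon)
    have hpos : 0 < ∑ j, (h j) ^ 2 :=
      Finset.sum_pos' (fun j _ => sq_nonneg _) ⟨j₁, Finset.mem_univ _, by positivity⟩
    have hsq : 0 < Real.sqrt (∑ j, (h j) ^ 2) := Real.sqrt_pos.2 hpos
    have hW0 : (0:ℝ) ≤ ∑ i, ((X *ᵥ h) i) ^ 2 := Finset.sum_nonneg fun i _ => sq_nonneg _
    have hW : ((1 - (Real.sqrt 2 + 1) * δ) / 2) ^ 2 * (∑ j, (h j) ^ 2)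
        ≤ ∑ i, ((X *ᵥ h) i) ^ 2 := by
      have h0 : 0 ≤ ((1 - (Real.sqrt 2 + 1) * δ) / 2) * Real.sqrt (∑ j, (h j) ^ 2) := by
        positivity
      nlinarith [hcore, Real.sq_sqrt (le_of_lt hpos), Real.sq_sqrt hW0,
        Real.sqrt_nonneg (∑ i, ((X *ᵥ h) i) ^ 2)]
    have hbdd : BddAbove (Set.range fun j => |(Xᵀ *ᵥ (X *ᵥ h)) j|) :=
      Set.Finite.bddAbove (Set.finite_range _)
    have hMle : ∀ j, |(Xᵀ *ᵥ (X *ᵥ h)) j| ≤ ⨆ i, |(Xᵀ *ᵥ (X *ᵥ h)) i| :=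
      fun j => le_ciSup hbdd j
    have hM0 : 0 ≤ ⨆ i, |(Xᵀ *ᵥ (X *ᵥ h)) i| := le_trans (abs_nonneg _) (hMle j₁)
    have hl1 : ∑ i, ((X *ᵥ h) i) ^ 2 ≤ (∑ j, |h j|) * ⨆ i, |(Xᵀ *ᵥ (X *ᵥ h)) i| := by
      rw [← RIPGR.dot_key X h]
      calc ∑ j, h j * (Xᵀ *ᵥ (X *ᵥ h)) j
          ≤ ∑ j, |h j| * ⨆ i, |(Xᵀ *ᵥ (X *ᵥ h)) i| := by
            refine Finset.sum_le_sum fun j _ => ?_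
            calc h j * (Xᵀ *ᵥ (X *ᵥ h)) j ≤ |h j * (Xᵀ *ᵥ (X *ᵥ h)) j| := le_abs_self _
              _ = |h j| * |(Xᵀ *ᵥ (X *ᵥ h)) j| := abs_mul _ _
              _ ≤ |h j| * ⨆ i, |(Xᵀ *ᵥ (X *ᵥ h)) i| :=
                  mul_le_mul_of_nonneg_left (hMle j) (abs_nonneg _)
        _ = (∑ j, |h j|) * ⨆ i, |(Xᵀ *ᵥ (X *ᵥ h)) i| := (Finset.sum_mul _ _ _).symm
    have hl2 : ∑ j, |h j| ≤ 2 * Real.sqrt ((s : ℝ) + 1) * Real.sqrt (∑ j, (h j) ^ 2) := by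
      have hsplit : ∑ j, |h j| = (∑ j ∈ T₀, |h j|) + ∑ j ∈ T₀ᶜ, |h j| :=
        (Finset.sum_add_sum_compl T₀ _).symm
      have hT : ∑ j ∈ T₀, |h j| ≤ Real.sqrt ((s : ℝ) + 1) * Real.sqrt (∑ j, (h j) ^ 2) := by
        have hcs := sq_sum_le_card_mul_sum_sq (s := T₀) (f := fun x => |h x|)
        have habs2 : ∑ x ∈ T₀, |h x| ^ 2 = ∑ x ∈ T₀, (h x) ^ 2 :=
          Finset.sum_congr rfl fun x _ => sq_abs _
        rw [habs2] at hcs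
        have hsub : ∑ x ∈ T₀, (h x) ^ 2 ≤ ∑ j, (h j) ^ 2 :=
          Finset.sum_le_sum_of_subset_of_nonneg (Finset.subset_univ _)
            (fun i _ _ => sq_nonneg _)
        have hcard : (T₀.card : ℝ) ≤ (s : ℝ) + 1 := by
          have h1 : T₀.card ≤ s + 1 := le_trans hT₀ (Nat.le_succ s)
          exact_mod_cast h1
        have hTnn : (0:ℝ) ≤ ∑ x ∈ T₀, (h x) ^ 2 := Finset.sum_nonneg fun x _ => sq_nonneg _
        have h4 : (∑ x ∈ T₀, |h x|) ^ 2 ≤ ((s : ℝ) + 1) * ∑ j, (h j) ^ 2 := by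
          nlinarith [hcs, hsub, hcard, hTnn, hpos]
        have hnn : (0:ℝ) ≤ ∑ x ∈ T₀, |h x| := Finset.sum_nonneg fun x _ => abs_nonneg _
        calc ∑ x ∈ T₀, |h x| = Real.sqrt ((∑ x ∈ T₀, |h x|) ^ 2) := (Real.sqrt_sq hnn).symm
          _ ≤ Real.sqrt (((s : ℝ) + 1) * ∑ j, (h j) ^ 2) := Real.sqrt_le_sqrt h4
          _ = Real.sqrt ((s : ℝ) + 1) * Real.sqrt (∑ j, (h j) ^ 2) :=
              Real.sqrt_mul (by positivity) _
      calc ∑ j, |h j| = (∑ j ∈ T₀, |h j|) + ∑ j ∈ T₀ᶜ, |h j| := hsplit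
        _ ≤ 2 * ∑ j ∈ T₀, |h j| := by linarith
        _ ≤ 2 * (Real.sqrt ((s : ℝ) + 1) * Real.sqrt (∑ j, (h j) ^ 2)) := by linarith
        _ = 2 * Real.sqrt ((s : ℝ) + 1) * Real.sqrt (∑ j, (h j) ^ 2) := by ring
    rw [div_mul_eq_mul_div, div_le_iff₀ (by positivity)]
    have e1 : ((1 - (Real.sqrt 2 + 1) * δ) / 2) ^ 2 * (∑ j, (h j) ^ 2)
        ≤ 2 * Real.sqrt ((s : ℝ) + 1) * Real.sqrt (∑ j, (h j) ^ 2)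
          * ⨆ i, |(Xᵀ *ᵥ (X *ᵥ h)) i| :=
      le_trans hW (le_trans hl1 (mul_le_mul_of_nonneg_right hl2 hM0))
    nlinarith [e1, hsq, Real.sq_sqrt (le_of_lt hpos), hM0, hsps]
end
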